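/- arXiv:1801.05004 — 11 statements merged into one kernel-verified Lean document; each statement's English description precedes it below -/
import Mathlib

section
/- For every positive integer n and every real x in [0,1], the index of coincidence of the binomial distribution satisfies F_n(x) = ∑_{k=0}^{n} C(n,k) C(2k,k) (x²−x)^k. -/
open Polynomial Finset

lemma aux_coeff (a b : ℝ) (n k : ℕ) (hk : k ≤ n) :
    ((C a * X + C b) ^ n).coeff k = (n.choose k : ℝ) * a ^ k * b ^ (n - k) := by
  rw [add_pow]
  rw [finset_sum_coeff]
  have : ∀ i ∈ range (n+1), ((C a * X) ^ i * C b ^ (n - i) * (n.choose i : ℝ[X])).coeff k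
      = if i = k then (n.choose k : ℝ) * a ^ k * b ^ (n - k) else 0 := by
    intro i _
    rw [mul_pow, ← C_pow, ← C_pow, ← C_eq_natCast]
    have h2 : C (a^i) * X ^ i * C (b^(n-i)) * C ((n.choose i : ℝ))
        = C (a^i * b^(n-i) * (n.choose i : ℝ)) * X ^ i := by ring_nf; simp [← C_mul]; ring_nf
    rw [h2, coeff_C_mul, coeff_X_pow]
    rcases eq_or_ne i k with h | h
    · subst h; rw [if_pos rfl, if_pos rfl, mul_one]; ring
    · rw [if_neg (Ne.symm h), if_neg h, mul_zero]
  rw [Finset.sum_congr rfl this, Finset.sum_ite_eq' (range (n+1)) k]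
  simp [Nat.lt_succ_of_le hk]

theorem stmt_0 (n : ℕ) (hn : 0 < n) (x : ℝ) (hx : x ∈ Set.Icc (0:ℝ) 1) :
    ∑ k ∈ Finset.range (n + 1), ((n.choose k : ℝ) * x ^ k * (1 - x) ^ (n - k)) ^ 2 =
    ∑ k ∈ Finset.range (n + 1), (n.choose k : ℝ) * ((2 * k).choose k) * (x ^ 2 - x) ^ k := by
  have key : ((C x * X + C (1-x)) * (C (1-x) * X + C x) : ℝ[X]) ^ n
      = (X + C (x*(1-x)) * (X - 1)^2 : ℝ[X]) ^ n := by
    congr 1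
    have h1 : (C (1-x) : ℝ[X]) = 1 - C x := by simp
    have h2 : (C (x*(1-x)) : ℝ[X]) = C x * (1 - C x) := by rw [map_mul, h1]
    rw [h1, h2]; ring
  have hL : (((C x * X + C (1-x)) * (C (1-x) * X + C x) : ℝ[X]) ^ n).coeff n
      = ∑ k ∈ range (n+1), ((n.choose k : ℝ) * x ^ k * (1-x) ^ (n-k))^2 := by
    rw [mul_pow, coeff_mul, Finset.Nat.sum_antidiagonal_eq_sum_range_succ_mk]
    refine Finset.sum_congr rfl fun i hi => ?_
    have hi' : i ≤ n := Nat.lt_succ_iff.mp (Finset.mem_range.mp hi)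
    rw [aux_coeff _ _ _ _ hi', aux_coeff _ _ _ _ (Nat.sub_le n i),
        Nat.choose_symm hi', Nat.sub_sub_self hi']
    ring
  have hR : ((X + C (x*(1-x)) * (X - 1)^2 : ℝ[X]) ^ n).coeff n
      = ∑ k ∈ range (n+1), (n.choose k : ℝ) * ((2 * k).choose k) * (x ^ 2 - x) ^ k := by
    rw [add_pow, finset_sum_coeff]
    have step : ∀ k ∈ range (n+1),
        ((X:ℝ[X]) ^ k * (C (x*(1-x)) * (X - 1)^2) ^ (n-k) * (n.choose k : ℝ[X])).coeff n
        = (n.choose (n-k) : ℝ) * ((2*(n-k)).choose (n-k)) * (x^2 - x)^(n-k) := by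
      intro k hk
      have hk' : k ≤ n := Nat.lt_succ_iff.mp (Finset.mem_range.mp hk)
      have hX1 : (X - 1 : ℝ[X]) = X + C (-1) := by rw [map_neg, map_one, ← sub_eq_add_neg]
      have h3 : ((X:ℝ[X]) ^ k * (C (x*(1-x)) * (X - 1)^2) ^ (n-k) * (n.choose k : ℝ[X]))
          = C ((x*(1-x))^(n-k) * (n.choose k : ℝ)) * ((X + C (-1))^(2*(n-k)) * X ^ k) := by
        rw [← hX1, mul_pow, ← C_pow, ← pow_mul, ← C_eq_natCast, C_mul]
        ring
      rw [h3, coeff_C_mul, coeff_mul_X_pow', if_pos hk', coeff_X_add_C_pow]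
      have h4 : 2*(n-k) - (n-k) = n-k := by omega
      rw [h4, Nat.choose_symm hk']
      have h6 : ((x^2 - x)^(n-k) : ℝ) = (-1)^(n-k) * (x*(1-x))^(n-k) := by
        rw [← mul_pow]; congr 1; ring
      rw [h6]; ring
    rw [Finset.sum_congr rfl step]
    have hrefl := Finset.sum_range_reflect
      (fun j => (n.choose j : ℝ) * (((2*j).choose j : ℕ) : ℝ) * (x^2-x)^j) (n+1)
    simpa using hrefl
  rw [← hL, key, hR]
end

section
/- For every positive integer n and every real x ≥ 0, the index of coincidence of the negative binomial distribution satisfies G_n(x) = (1+2x)^{1−2n} ∑_{k=0}^{n−1} C(n−1,k) C(2k,k) (x²+x)^k. -/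
open Finset Polynomial


lemma vand2 (a b : ℕ) :
    ∑ q ∈ range (a + 1), a.choose q * b.choose q = (a + b).choose a := by
  rw [Nat.add_choose_eq, Finset.Nat.sum_antidiagonal_eq_sum_range_succ_mk,
    ← Finset.sum_range_reflect]
  refine Finset.sum_congr rfl fun j hj => ?_
  simp only [mem_range] at hj
  have h1 : a + 1 - 1 - j = a - j := by omega
  rw [h1, Nat.choose_symm (by omega)]

lemma auxInner (m k j : ℕ) (hj : j ≤ m) :
    ∑ q ∈ range (k + 1), m.choose q * q.choose j * (m + k).choose (m + q)
      = m.choose j * (if j ≤ k then ((k - j) + 2 * m).choose (2 * m) else 0) := by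
  by_cases hjk : j ≤ k
  · rw [if_pos hjk]
    have hsub : Finset.Ico j (k + 1) ⊆ range (k + 1) := by
      intro q hq; simp only [Finset.mem_Ico] at hq; simp only [mem_range]; omega
    rw [← Finset.sum_subset hsub (fun q hq hq' => by
      have hql : q < j := by
        simp only [mem_range] at hq; simp only [Finset.mem_Ico, not_and, not_lt] at hq'
        by_contra h; push_neg at h; omega
      rw [Nat.choose_eq_zero_of_lt hql, Nat.mul_zero, Nat.zero_mul])]
    rw [Finset.sum_Ico_eq_sum_range]
    have hkj : k + 1 - j = (k - j) + 1 := by omega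
    rw [hkj]
    have hrhs : ((k - j) + 2 * m).choose (2 * m) = ((m - j) + (m + k)).choose (k - j) := by
      rw [← Nat.choose_symm_add]
      congr 1
      omega
    rw [hrhs, Nat.add_choose_eq, Finset.Nat.sum_antidiagonal_eq_sum_range_succ_mk,
      Finset.mul_sum]
    refine Finset.sum_congr rfl fun p hp => ?_
    simp only [mem_range] at hp
    have hpk : j + p ≤ k := by omega
    have hii : (m + k).choose (m + (j + p)) = (m + k).choose ((k - j) - p) := by
      rw [← Nat.choose_symm (show m + (j + p) ≤ m + k by omega)]
      congr 1
      omega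
    rw [hii]
    by_cases hpm : j + p ≤ m
    · have := Nat.choose_mul (n := m) (Nat.le_add_right j p)
      rw [this, Nat.add_sub_cancel_left, Nat.mul_assoc]
    · rw [Nat.choose_eq_zero_of_lt (by omega),
        Nat.choose_eq_zero_of_lt (show m - j < p by omega), Nat.zero_mul, Nat.zero_mul,
        Nat.mul_zero]
  · rw [if_neg hjk, Nat.mul_zero]
    refine Finset.sum_eq_zero fun q hq => ?_
    simp only [mem_range] at hq
    rw [Nat.choose_eq_zero_of_lt (show q < j by omega), Nat.mul_zero, Nat.zero_mul]

lemma identA (m k : ℕ) :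
    ∑ j ∈ range (m + 1), m.choose j ^ 2 *
        (if j ≤ k then ((k - j) + 2 * m).choose (2 * m) else 0)
      = (m + k).choose k ^ 2 := by
  have step1 : ∀ j ∈ range (m + 1),
      m.choose j ^ 2 * (if j ≤ k then ((k - j) + 2 * m).choose (2 * m) else 0)
        = ∑ q ∈ range (k + 1), m.choose j * (m.choose q * q.choose j * (m + k).choose (m + q)) := by
    intro j hj
    simp only [mem_range] at hj
    rw [← Finset.mul_sum, auxInner m k j (by omega), pow_two, Nat.mul_assoc]
  rw [Finset.sum_congr rfl step1, Finset.sum_comm]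
  have step2 : ∀ q ∈ range (k + 1),
      ∑ j ∈ range (m + 1), m.choose j * (m.choose q * q.choose j * (m + k).choose (m + q))
        = m.choose q * (m + k).choose (m + q) * (m + q).choose m := by
    intro q hq
    have : ∀ j ∈ range (m + 1),
        m.choose j * (m.choose q * q.choose j * (m + k).choose (m + q))
          = (m.choose q * (m + k).choose (m + q)) * (m.choose j * q.choose j) := fun j hj => by
      ring
    rw [Finset.sum_congr rfl this, ← Finset.mul_sum, vand2 m q]
  rw [Finset.sum_congr rfl step2]
  have step3 : ∀ q ∈ range (k + 1),
      m.choose q * (m + k).choose (m + q) * (m + q).choose m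
        = (m + k).choose m * (m.choose q * k.choose q) := by
    intro q hq
    simp only [mem_range] at hq
    have h := Nat.choose_mul (n := m + k) (Nat.le_add_right m q)
    rw [Nat.add_sub_cancel_left, Nat.add_sub_cancel_left] at h
    calc m.choose q * (m + k).choose (m + q) * (m + q).choose m
        = m.choose q * ((m + k).choose (m + q) * (m + q).choose m) := by ring
      _ = m.choose q * ((m + k).choose m * k.choose q) := by rw [h]
      _ = (m + k).choose m * (m.choose q * k.choose q) := by ring
  rw [Finset.sum_congr rfl step3, ← Finset.mul_sum]
  have : ∑ q ∈ range (k + 1), m.choose q * k.choose q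
      = ∑ q ∈ range (k + 1), k.choose q * m.choose q := by
    refine Finset.sum_congr rfl fun q hq => Nat.mul_comm _ _
  rw [this, vand2 k m, pow_two]
  rw [show k + m = m + k by omega, Nat.choose_symm_add]

lemma identB (m : ℕ) (x : ℝ) :
    ∑ j ∈ range (m + 1), (m.choose j : ℝ) ^ 2 * (x ^ 2) ^ j * ((1 + x) ^ 2) ^ (m - j)
      = ∑ k ∈ range (m + 1), (m.choose k : ℝ) * ((2 * k).choose k : ℝ) * (x ^ 2 + x) ^ k := by
  set a : ℝ := x ^ 2 with ha
  set b : ℝ := (1 + x) ^ 2 with hb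
  set w : ℝ := x ^ 2 + x with hw
  set p : ℝ[X] := (X + C a) * (X + C b) with hp
  have hform : p = (X + C w) ^ 2 + X := by
    rw [hp, ha, hb, hw, map_add, map_pow, map_pow, map_add, map_one]
    ring
  have h1 : (p ^ m).coeff m
      = ∑ j ∈ range (m + 1), (m.choose j : ℝ) ^ 2 * a ^ j * b ^ (m - j) := by
    rw [hp, mul_pow, coeff_mul, Finset.Nat.sum_antidiagonal_eq_sum_range_succ_mk,
      ← Finset.sum_range_reflect]
    refine Finset.sum_congr rfl fun j hj => ?_
    simp only [mem_range] at hj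
    have hjm : j ≤ m := by omega
    have e1 : m + 1 - 1 - j = m - j := by omega
    rw [e1, coeff_X_add_C_pow, coeff_X_add_C_pow]
    have e2 : m - (m - j) = j := by omega
    rw [e2, Nat.choose_symm hjm]
    ring
  have h2 : (p ^ m).coeff m
      = ∑ k ∈ range (m + 1), (m.choose k : ℝ) * ((2 * k).choose k : ℝ) * w ^ k := by
    rw [hform, add_pow]
    rw [finset_sum_coeff]
    refine Finset.sum_congr rfl fun k hk => ?_
    simp only [mem_range] at hk
    have hkm : k ≤ m := by omega
    rw [← pow_mul, ← C_eq_natCast, coeff_mul_C, coeff_mul_X_pow',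
      if_pos (Nat.sub_le m k)]
    have e1 : m - (m - k) = k := by omega
    rw [e1, coeff_X_add_C_pow]
    have e2 : 2 * k - k = k := by omega
    rw [e2]
    ring
  rw [← h1, h2]


lemma identT (m : ℕ) {u : ℝ} (h0 : 0 ≤ u) (h1 : u < 1) :
    HasSum (fun k : ℕ => ((m + k).choose k : ℝ) ^ 2 * u ^ k)
      ((∑ j ∈ range (m + 1), (m.choose j : ℝ) ^ 2 * u ^ j) * (1 / (1 - u) ^ (2 * m + 1))) := by
  have hu : ‖u‖ < 1 := by rw [Real.norm_eq_abs, abs_of_nonneg h0]; exact h1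
  have base : HasSum (fun i : ℕ => ((i + 2 * m).choose (2 * m) : ℝ) * u ^ i)
      (1 / (1 - u) ^ (2 * m + 1)) := by
    simpa using hasSum_choose_mul_geometric_of_norm_lt_one (2 * m) hu
  set D : ℝ := 1 / (1 - u) ^ (2 * m + 1) with hD
  set F : ℕ → ℕ → ℝ := fun j k => if j ≤ k then
      (m.choose j : ℝ) ^ 2 * (((k - j) + 2 * m).choose (2 * m) : ℝ) * u ^ k else 0 with hF
  have hFsum : ∀ j ∈ range (m + 1), HasSum (F j) ((m.choose j : ℝ) ^ 2 * u ^ j * D) := by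
    intro j _
    have hinj : Function.Injective (fun i : ℕ => i + j) := fun a b h => by simpa using h
    refine (Function.Injective.hasSum_iff hinj ?_).mp ?_
    · intro k hk
      have : ¬ j ≤ k := by
        intro h
        exact hk ⟨k - j, show k - j + j = k by omega⟩
      simp only [hF, if_neg this]
    · have := base.mul_left ((m.choose j : ℝ) ^ 2 * u ^ j)
      convert this using 1
      · rfl
      funext i
      simp only [hF, Function.comp_apply, if_pos (Nat.le_add_left j i), Nat.add_sub_cancel]
      rw [pow_add]
      ring
  have total := hasSum_sum hFsum
  have hpt : ∀ k : ℕ, ∑ j ∈ range (m + 1), F j k = ((m + k).choose k : ℝ) ^ 2 * u ^ k := by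
    intro k
    have : ∀ j ∈ range (m + 1), F j k
        = ((m.choose j ^ 2 * (if j ≤ k then ((k - j) + 2 * m).choose (2 * m) else 0) : ℕ) : ℝ)
          * u ^ k := by
      intro j _
      by_cases hjk : j ≤ k
      · simp only [hF, if_pos hjk]
        push_cast
        ring
      · simp only [hF, if_neg hjk]
        push_cast
        ring
    rw [Finset.sum_congr rfl this, ← Finset.sum_mul, ← Nat.cast_sum, identA m k]
    push_cast
    ring
  have : (fun k => ∑ j ∈ range (m + 1), F j k)
      = fun k : ℕ => ((m + k).choose k : ℝ) ^ 2 * u ^ k := funext hpt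
  rw [this] at total
  convert total using 1
  rw [← Finset.sum_mul]

theorem stmt_1 (n : ℕ) (hn : 0 < n) (x : ℝ) (hx : 0 ≤ x) :
    ∑' k : ℕ, (((n + k - 1).choose k : ℝ) * x ^ k * ((1 + x) ^ (n + k))⁻¹) ^ 2 =
    (1 + 2 * x) ^ ((1 : ℤ) - 2 * n) *
      ∑ k ∈ Finset.range n, ((n - 1).choose k : ℝ) * ((2 * k).choose k) * (x ^ 2 + x) ^ k := by
  obtain ⟨m, rfl⟩ : ∃ m, n = m + 1 := ⟨n - 1, by omega⟩
  have hx1 : (0 : ℝ) < 1 + x := by linarith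
  have h2x : (0 : ℝ) < 1 + 2 * x := by linarith
  have hy : (1 + x) ≠ 0 := by positivity
  have hz : (1 + 2 * x) ≠ 0 := by positivity
  set u : ℝ := (x / (1 + x)) ^ 2 with hu
  have hu0 : 0 ≤ u := sq_nonneg _
  have hu1 : u < 1 := by
    have h01 : 0 ≤ x / (1 + x) := div_nonneg hx hx1.le
    have hlt : x / (1 + x) < 1 := (div_lt_one hx1).mpr (by linarith)
    nlinarith
  have hone : 1 - u = (1 + 2 * x) / (1 + x) ^ 2 := by
    rw [hu, div_pow, eq_div_iff (by positivity)]
    field_simp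
    ring
  have hsummand : ∀ k : ℕ,
      (((m + 1 + k - 1).choose k : ℝ) * x ^ k * ((1 + x) ^ (m + 1 + k))⁻¹) ^ 2
        = ((m + k).choose k : ℝ) ^ 2 * u ^ k * ((1 + x) ^ (2 * (m + 1)))⁻¹ := by
    intro k
    have e1 : m + 1 + k - 1 = m + k := by omega
    rw [e1, hu, ← pow_mul, div_pow]
    rw [show (1 + x) ^ (2 * (m + 1)) = ((1 + x) ^ (m + 1)) ^ 2 by rw [← pow_mul, mul_comm]]
    rw [show (1 + x) ^ (m + 1 + k) = (1 + x) ^ (m + 1) * (1 + x) ^ k by rw [← pow_add]]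
    rw [show x ^ (2 * k) = (x ^ k) ^ 2 by rw [← pow_mul, mul_comm]]
    rw [show (1 + x) ^ (2 * k) = ((1 + x) ^ k) ^ 2 by rw [← pow_mul, mul_comm]]
    field_simp
  rw [tsum_congr hsummand]
  have hsum := (identT m hu0 hu1).mul_right ((1 + x) ^ (2 * (m + 1)))⁻¹
  rw [hsum.tsum_eq]
  have hzpow : (1 + 2 * x) ^ ((1 : ℤ) - 2 * ((m : ℕ) + 1 : ℕ))
      = ((1 + 2 * x) ^ (2 * m + 1 : ℕ))⁻¹ := by
    have e : (1 : ℤ) - 2 * ((m : ℕ) + 1 : ℕ) = -(2 * m + 1 : ℕ) := by push_cast; ring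
    rw [e, zpow_neg, zpow_natCast]
  rw [hzpow, show (m + 1) - 1 = m from by omega, ← identB m x]
  have hP : (∑ j ∈ range (m + 1), (m.choose j : ℝ) ^ 2 * u ^ j) * ((1 + x) ^ 2) ^ m
      = ∑ j ∈ range (m + 1), (m.choose j : ℝ) ^ 2 * (x ^ 2) ^ j * ((1 + x) ^ 2) ^ (m - j) := by
    rw [Finset.sum_mul]
    refine Finset.sum_congr rfl fun j hj => ?_
    simp only [mem_range] at hj
    rw [hu, div_pow, div_pow,
      show ((1 + x) ^ 2) ^ m = ((1 + x) ^ 2) ^ (m - j) * ((1 + x) ^ 2) ^ j by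
        rw [← pow_add]; congr 1; omega]
    have e6 : ((1 + x) ^ 2) ^ j ≠ 0 := by positivity
    field_simp
  rw [← hP, hone, div_pow, ← pow_mul, ← pow_mul]
  have hy1 : (1 + x) ^ (2 * (2 * m + 1)) ≠ 0 := pow_ne_zero _ hy
  have hz1 : (1 + 2 * x) ^ (2 * m + 1) ≠ 0 := pow_ne_zero _ hz
  field_simp
  rw [show 2 * (2 * m + 1) = 2 * m + 2 * (m + 1) from by omega, pow_add]
  ring
end

section
/- For all integers n ≥ 0 and 0 ≤ k ≤ n, the identity ∑_{j=k}^{n} C(j,k) C(2j,j) C(2n−2j, n−j) = 4^{n−k} C(n,k) C(2k,k) holds. -/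
open Finset Nat

lemma base_conv (m : ℕ) :
    ∑ i ∈ range (m+1), Nat.centralBinom i * Nat.centralBinom (m-i) = 4^m := by
  induction m with
  | zero => simp [Nat.centralBinom]
  | succ m ih =>
    have hsym : ∀ M : ℕ, ∑ i ∈ range (M+1), (M-i) * (Nat.centralBinom i * Nat.centralBinom (M-i))
        = ∑ i ∈ range (M+1), i * (Nat.centralBinom i * Nat.centralBinom (M-i)) := by
      intro M
      rw [← Finset.sum_range_reflect]
      apply Finset.sum_congr rfl
      intro i hi
      have hi' : i ≤ M := by simp at hi; omega
      have h1 : M - (M - i) = i := by omega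
      have h2 : M + 1 - 1 - i = M - i := by omega
      rw [h2, h1]; ring
    have hmul : ∀ M : ℕ, M * ∑ i ∈ range (M+1), Nat.centralBinom i * Nat.centralBinom (M-i)
        = 2 * ∑ i ∈ range (M+1), i * (Nat.centralBinom i * Nat.centralBinom (M-i)) := by
      intro M
      rw [Finset.mul_sum, two_mul]
      nth_rewrite 1 [← hsym M]
      rw [← Finset.sum_add_distrib]
      apply Finset.sum_congr rfl
      intro i hi
      have hi' : i ≤ M := by simp at hi; omega
      obtain ⟨d, hd⟩ := Nat.le.dest hi'
      have h2 : M - i = d := by omega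
      rw [h2, ← hd]
      ring
    have hshift : ∑ i ∈ range (m+1+1), i * (Nat.centralBinom i * Nat.centralBinom (m+1-i))
        = ∑ j ∈ range (m+1), (j+1) * (Nat.centralBinom (j+1) * Nat.centralBinom (m-j)) := by
      rw [Finset.sum_range_succ' (fun i => i * (Nat.centralBinom i * Nat.centralBinom (m+1-i))) (m+1)]
      simp only [Nat.zero_mul, add_zero]
      apply Finset.sum_congr rfl
      intro j hj
      have : m + 1 - (j+1) = m - j := by omega
      rw [this]
    have hrec : ∀ j, (j+1) * (Nat.centralBinom (j+1) * Nat.centralBinom (m-j))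
        = 2 * (2*j+1) * (Nat.centralBinom j * Nat.centralBinom (m-j)) := by
      intro j
      rw [← mul_assoc, Nat.succ_mul_centralBinom_succ j, mul_assoc]
    have key : (m+1) * ∑ i ∈ range (m+1+1), Nat.centralBinom i * Nat.centralBinom (m+1-i)
        = (m+1) * (4 * 4^m) := by
      rw [hmul (m+1), hshift]
      have h5 : ∑ j ∈ range (m+1), (j+1) * (Nat.centralBinom (j+1) * Nat.centralBinom (m-j))
          = ∑ j ∈ range (m+1), 2 * (2*j+1) * (Nat.centralBinom j * Nat.centralBinom (m-j)) := by
        exact Finset.sum_congr rfl (fun j _ => hrec j)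
      rw [h5]
      have expand : ∑ j ∈ range (m+1), 2 * (2*j+1) * (Nat.centralBinom j * Nat.centralBinom (m-j))
          = 2 * (2 * ∑ j ∈ range (m+1), j * (Nat.centralBinom j * Nat.centralBinom (m-j)))
            + 2 * ∑ j ∈ range (m+1), Nat.centralBinom j * Nat.centralBinom (m-j) := by
        rw [Finset.mul_sum, Finset.mul_sum, Finset.mul_sum, ← Finset.sum_add_distrib]
        apply Finset.sum_congr rfl
        intro j _
        ring
      rw [expand, ← hmul m, ih]
      ring
    have := Nat.eq_of_mul_eq_mul_left (show 0 < m + 1 by omega) key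
    rw [this]
    ring

lemma star (k d : ℕ) :
    Nat.centralBinom k * (k+d+1).choose (k+1) * Nat.centralBinom (k+d+1)
      = Nat.centralBinom (k+1) * (k+d).choose k * Nat.centralBinom (k+d)
        + 4 * (Nat.centralBinom k * (k+d).choose (k+1) * Nat.centralBinom (k+d)) := by
  apply Nat.eq_of_mul_eq_mul_left (show 0 < (k+d+1)*(k+1) by positivity)
  have h1 := Nat.succ_mul_centralBinom_succ (k+d)
  have h2 := Nat.succ_mul_centralBinom_succ k
  have h3 := Nat.add_one_mul_choose_eq (k+d) k
  have h4 := Nat.choose_succ_right_eq (k+d) k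
  have h5 : k + d - k = d := by omega
  rw [h5] at h4
  zify at h1 h2 h3 h4 ⊢
  linear_combination ((Nat.centralBinom k : ℤ) * (k+d).choose k * (k+d+1)) * h1
    - ((Nat.centralBinom (k+d) : ℤ) * (k+d).choose k * (k+d+1)) * h2
    - ((Nat.centralBinom k : ℤ) * Nat.centralBinom (k+d+1) * (k+d+1)) * h3
    - (4 * (Nat.centralBinom k : ℤ) * Nat.centralBinom (k+d) * (k+d+1)) * h4

lemma main_id : ∀ k m : ℕ,
    ∑ i ∈ range (m+1), (i+k).choose k * Nat.centralBinom (i+k) * Nat.centralBinom (m-i)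
      = Nat.centralBinom k * ((m+k).choose k * 4^m) := by
  intro k
  induction k with
  | zero =>
    intro m
    simpa [Nat.centralBinom] using base_conv m
  | succ k ihk =>
    intro m
    induction m with
    | zero => simp
    | succ m ihm =>
      apply Nat.eq_of_mul_eq_mul_left (Nat.centralBinom_pos k)
      have hstep : Nat.centralBinom k * ∑ i ∈ range (m+1+1),
            (i+(k+1)).choose (k+1) * Nat.centralBinom (i+(k+1)) * Nat.centralBinom (m+1-i)
          = Nat.centralBinom (k+1) * ∑ i ∈ range (m+1+1),
              (i+k).choose k * Nat.centralBinom (i+k) * Nat.centralBinom (m+1-i)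
            + 4 * (Nat.centralBinom k * ∑ i ∈ range (m+1+1),
              (i+k).choose (k+1) * Nat.centralBinom (i+k) * Nat.centralBinom (m+1-i)) := by
        rw [Finset.mul_sum, Finset.mul_sum, Finset.mul_sum, Finset.mul_sum,
          ← Finset.sum_add_distrib]
        apply Finset.sum_congr rfl
        intro i _
        have h := star k i
        have e1 : i + (k+1) = k + i + 1 := by omega
        have e2 : i + k = k + i := by omega
        rw [e1, e2]
        zify at h ⊢
        linear_combination (Nat.centralBinom (m+1-i) : ℤ) * h
      have hpeel : ∑ i ∈ range (m+1+1),
            (i+k).choose (k+1) * Nat.centralBinom (i+k) * Nat.centralBinom (m+1-i)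
          = ∑ j ∈ range (m+1),
            (j+(k+1)).choose (k+1) * Nat.centralBinom (j+(k+1)) * Nat.centralBinom (m-j) := by
        rw [Finset.sum_range_succ'
          (fun i => (i+k).choose (k+1) * Nat.centralBinom (i+k) * Nat.centralBinom (m+1-i)) (m+1)]
        simp only [Nat.zero_add, Nat.choose_eq_zero_of_lt (Nat.lt_succ_self k), Nat.zero_mul,
          add_zero]
        apply Finset.sum_congr rfl
        intro j _
        have e1 : j + 1 + k = j + (k+1) := by omega
        have e2 : m + 1 - (j+1) = m - j := by omega
        rw [e1, e2]
      rw [hstep, hpeel, ihk (m+1), ihm]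
      have hp : (m+1+(k+1)).choose (k+1) = (m+1+k).choose k + (m+1+k).choose (k+1) := by
        rw [show m+1+(k+1) = (m+1+k)+1 by omega, Nat.choose_succ_succ]
      have e3 : m + (k+1) = m + 1 + k := by omega
      rw [e3, hp]
      ring

theorem stmt_2 (n k : ℕ) (hk : k ≤ n) :
    ∑ j ∈ Finset.Icc k n, j.choose k * (2 * j).choose j * (2 * (n - j)).choose (n - j) =
    4 ^ (n - k) * n.choose k * (2 * k).choose k := by
  rw [← Finset.Ico_add_one_right_eq_Icc, Finset.sum_Ico_eq_sum_range]
  have h1 : n + 1 - k = (n - k) + 1 := by omega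
  rw [h1]
  have h2 : ∑ i ∈ range ((n-k)+1),
      (k+i).choose k * (2*(k+i)).choose (k+i) * (2*(n-(k+i))).choose (n-(k+i))
      = ∑ i ∈ range ((n-k)+1),
      (i+k).choose k * Nat.centralBinom (i+k) * Nat.centralBinom ((n-k)-i) := by
    apply Finset.sum_congr rfl
    intro i hi
    have hi' : i ≤ n - k := by simp at hi; omega
    have e1 : k + i = i + k := by omega
    rw [e1]
    have e2 : n - (i+k) = (n-k) - i := by omega
    rw [e2]
    rfl
  rw [h2, main_id k (n-k)]
  have e3 : n - k + k = n := by omega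
  rw [e3]
  show _ = 4 ^ (n-k) * n.choose k * Nat.centralBinom k
  ring
end

section
/- For all integers n ≥ 0 and 0 ≤ j ≤ n, the identity ∑_{i=0}^{n−j} (−1/4)^i C(n−j,i) C(2i+2j, i+j) = 4^{j−n} C(2j,j) C(2n−2j, n−j) / C(n,j) holds (as an identity of rational numbers). -/
open Nat in
lemma key (m : ℕ) : ∀ j : ℕ,
    ∑ i ∈ Finset.range (m + 1),
      (-1/4 : ℚ) ^ i * (m.choose i) * ((2 * (i + j)).choose (i + j)) =
    ((2 * j).choose j : ℚ) * ((2 * m).choose m) / ((m + j).choose j) / 4 ^ m := by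
  induction m with
  | zero => intro j; simp
  | succ m ih =>
    intro j
    have hsum : ∑ i ∈ Finset.range (m + 1 + 1),
        (-1/4 : ℚ) ^ i * ((m+1).choose i) * ((2 * (i + j)).choose (i + j))
        = (∑ i ∈ Finset.range (m + 1),
            (-1/4 : ℚ) ^ i * (m.choose i) * ((2 * (i + j)).choose (i + j)))
          - (1/4) * ∑ i ∈ Finset.range (m + 1),
            (-1/4 : ℚ) ^ i * (m.choose i) * ((2 * (i + (j+1))).choose (i + (j+1))) := by
      rw [Finset.sum_range_succ' _ (m+1)]
      have h1 : ∑ i ∈ Finset.range (m + 1),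
          (-1/4 : ℚ) ^ (i+1) * ((m+1).choose (i+1)) * ((2 * ((i+1) + j)).choose ((i+1) + j))
          = ∑ i ∈ Finset.range (m + 1),
            ((-1/4 : ℚ) ^ (i+1) * (m.choose (i+1)) * ((2 * ((i+1) + j)).choose ((i+1) + j))
            + (-1/4 : ℚ) ^ (i+1) * (m.choose i) * ((2 * (i + (j+1))).choose (i + (j+1)))) := by
        apply Finset.sum_congr rfl
        intro i _
        have h : (m+1).choose (i+1) = m.choose i + m.choose (i+1) :=
          Nat.choose_succ_succ m i
        rw [h]
        push_cast
        have e1 : 2 * (i + 1 + j) = 2 * (i + (j+1)) := by ring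
        have e2 : i + 1 + j = i + (j + 1) := by ring
        rw [e1, e2]
        ring
      rw [h1, Finset.sum_add_distrib]
      have h2 : ∑ i ∈ Finset.range (m + 1),
          (-1/4 : ℚ) ^ (i+1) * (m.choose (i+1)) * ((2 * ((i+1) + j)).choose ((i+1) + j))
          + (-1/4 : ℚ) ^ 0 * ((m+1).choose 0) * ((2 * (0 + j)).choose (0 + j))
          = ∑ i ∈ Finset.range (m + 1),
            (-1/4 : ℚ) ^ i * (m.choose i) * ((2 * (i + j)).choose (i + j)) := by
        rw [Finset.sum_range_succ' (fun i => (-1/4 : ℚ) ^ i * (m.choose i) * ((2 * (i + j)).choose (i + j))) m,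
          Finset.sum_range_succ]
        simp [Nat.choose_succ_self]
      have h3 : ∑ i ∈ Finset.range (m + 1),
          (-1/4 : ℚ) ^ (i+1) * (m.choose i) * ((2 * (i + (j+1))).choose (i + (j+1)))
          = - (1/4) * ∑ i ∈ Finset.range (m + 1),
            (-1/4 : ℚ) ^ i * (m.choose i) * ((2 * (i + (j+1))).choose (i + (j+1))) := by
        rw [Finset.mul_sum]
        apply Finset.sum_congr rfl
        intro i _
        ring
      rw [h3]
      linarith [h2]
    rw [hsum, ih j, ih (j+1)]
    have c1 : ((2 * j).choose j : ℚ) = (2*j)! / ((j)! * (j)!) := by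
      rw [Nat.cast_choose ℚ (by omega : j ≤ 2*j), show 2*j - j = j from by omega]
    have c2 : ((2 * (j+1)).choose (j+1) : ℚ) = (2*(j+1))! / ((j+1)! * (j+1)!) := by
      rw [Nat.cast_choose ℚ (by omega : j+1 ≤ 2*(j+1)), show 2*(j+1) - (j+1) = j+1 from by omega]
    have c3 : ((2 * m).choose m : ℚ) = (2*m)! / ((m)! * (m)!) := by
      rw [Nat.cast_choose ℚ (by omega : m ≤ 2*m), show 2*m - m = m from by omega]
    have c4 : ((2 * (m+1)).choose (m+1) : ℚ) = (2*(m+1))! / ((m+1)! * (m+1)!) := by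
      rw [Nat.cast_choose ℚ (by omega : m+1 ≤ 2*(m+1)), show 2*(m+1) - (m+1) = m+1 from by omega]
    have c5 : (((m + j).choose j : ℕ) : ℚ) = (m+j)! / ((j)! * (m)!) := by
      rw [Nat.cast_choose ℚ (by omega : j ≤ m+j), show m+j - j = m from by omega]
    have c6 : (((m + (j+1)).choose (j+1) : ℕ) : ℚ) = (m+j+1)! / ((j+1)! * (m)!) := by
      rw [Nat.cast_choose ℚ (by omega : j+1 ≤ m+(j+1)), show m+(j+1) - (j+1) = m from by omega,
        show m+(j+1) = m+j+1 from by omega]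
    have c7 : (((m + 1 + j).choose j : ℕ) : ℚ) = (m+j+1)! / ((j)! * (m+1)!) := by
      rw [Nat.cast_choose ℚ (by omega : j ≤ m+1+j), show m+1+j - j = m+1 from by omega,
        show m+1+j = m+j+1 from by omega]
    have f1 : ((2*(j+1))! : ℚ) = (2*j+2) * (2*j+1) * (2*j)! := by
      rw [show 2*(j+1) = (2*j+1)+1 from by omega, Nat.factorial_succ, Nat.factorial_succ]
      push_cast; ring
    have f2 : ((2*(m+1))! : ℚ) = (2*m+2) * (2*m+1) * (2*m)! := by
      rw [show 2*(m+1) = (2*m+1)+1 from by omega, Nat.factorial_succ, Nat.factorial_succ]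
      push_cast; ring
    have f3 : ((j+1)! : ℚ) = (j+1) * (j)! := by rw [Nat.factorial_succ]; push_cast; ring
    have f4 : ((m+1)! : ℚ) = (m+1) * (m)! := by rw [Nat.factorial_succ]; push_cast; ring
    have f5 : ((m+j+1)! : ℚ) = (m+j+1) * (m+j)! := by rw [Nat.factorial_succ]; push_cast; ring
    rw [c1, c2, c3, c4, c5, c6, c7, f1, f2, f3, f4, f5]
    have nz : ∀ k : ℕ, ((k)! : ℚ) ≠ 0 := fun k => by positivity
    have n1 := nz j; have n2 := nz m; have n3 := nz (2*j); have n4 := nz (2*m); have n5 := nz (m+j)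
    have n6 : ((m:ℚ)+j+1) ≠ 0 := by positivity
    have n7 : ((j:ℚ)+1) ≠ 0 := by positivity
    have n8 : ((m:ℚ)+1) ≠ 0 := by positivity
    have n9 : ((4:ℚ))^m ≠ 0 := by positivity
    field_simp
    ring

theorem stmt_3 (n j : ℕ) (hj : j ≤ n) :
    ∑ i ∈ Finset.range (n - j + 1),
      (-1/4 : ℚ) ^ i * ((n - j).choose i) * ((2 * i + 2 * j).choose (i + j)) =
    (4 : ℚ) ^ ((j : ℤ) - n) * ((2 * j).choose j) * ((2 * (n - j)).choose (n - j)) /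
      (n.choose j) := by
  have h := key (n - j) j
  have e1 : ∀ i, 2 * i + 2 * j = 2 * (i + j) := fun i => by ring
  simp_rw [e1]
  rw [h]
  have e2 : n - j + j = n := by omega
  rw [e2]
  have e3 : (4 : ℚ) ^ ((j : ℤ) - n) = 1 / 4 ^ (n - j) := by
    rw [show (j : ℤ) - n = -((n - j : ℕ) : ℤ) from by omega, zpow_neg, zpow_natCast]
    ring
  rw [e3]
  ring
end

section
/- For every positive integer n and real x, ∑_{k=0}^{n} C(n,k) C(2k,k) (x²−x)^k = ∑_{j=0}^{n} (1−2x)^{2j} · 4^{−n} · C(2j,j) · C(2n−2j, n−j), i.e., the two explicit expressions for F_n(x) coincide as polynomials in x. -/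
open Finset

private abbrev cb (m : ℕ) : ℕ := Nat.centralBinom m

private lemma step4 (n k j : ℕ) (hj : j ≤ n) :
    (n + 1 - k) * (cb j * j.choose k * cb (n + 1 - j)) +
      (j + 1 - k) * (cb (j + 1) * (j + 1).choose k * cb (n - j)) =
    4 * (n + 1) * (cb j * j.choose k * cb (n - j)) +
      (j - k) * (cb j * j.choose k * cb (n + 1 - j)) := by
  rcases lt_or_ge j k with hk | hk
  · have h1 : j.choose k = 0 := Nat.choose_eq_zero_of_lt hk
    have h2 : j + 1 - k = 0 := by omega
    simp [h1, h2]
  · obtain ⟨d, rfl⟩ := Nat.exists_eq_add_of_le hk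
    obtain ⟨m, rfl⟩ := Nat.exists_eq_add_of_le hj
    have h1 : (k + d).choose k * (k + d + 1) = (k + d + 1).choose k * (d + 1) := by
      have := Nat.choose_mul_succ_eq (k + d) k
      rwa [show k + d + 1 - k = d + 1 by omega] at this
    have h2 : (m + 1) * cb (m + 1) = 2 * (2 * m + 1) * cb m :=
      Nat.succ_mul_centralBinom_succ m
    have h3 : (k + d + 1) * cb (k + d + 1) = 2 * (2 * (k + d) + 1) * cb (k + d) :=
      Nat.succ_mul_centralBinom_succ (k + d)
    rw [show k + d + m + 1 - k = m + 1 + d by omega,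
        show k + d + 1 - k = d + 1 by omega,
        show k + d + m - (k + d) = m by omega,
        show k + d + m + 1 - (k + d) = m + 1 by omega,
        show k + d - k = d by omega]
    zify at h1 h2 h3 ⊢
    linear_combination (-(cb (k + d + 1) * cb m : ℤ)) * h1 +
      ((k + d).choose k * cb m : ℤ) * h3 + (cb (k + d) * (k + d).choose k : ℤ) * h2

private lemma tele4 (n k : ℕ) :
    (n + 1 - k) * ∑ j ∈ range (n + 2), cb j * j.choose k * cb (n + 1 - j) =
    4 * (n + 1) * ∑ j ∈ range (n + 1), cb j * j.choose k * cb (n - j) := by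
  have hsum : ∑ j ∈ range (n + 1),
      ((n + 1 - k) * (cb j * j.choose k * cb (n + 1 - j)) +
        (j + 1 - k) * (cb (j + 1) * (j + 1).choose k * cb (n - j))) =
      ∑ j ∈ range (n + 1),
      (4 * (n + 1) * (cb j * j.choose k * cb (n - j)) +
        (j - k) * (cb j * j.choose k * cb (n + 1 - j))) :=
    Finset.sum_congr rfl fun j hj => step4 n k j (Nat.lt_succ_iff.mp (mem_range.mp hj))
  rw [Finset.sum_add_distrib, Finset.sum_add_distrib, ← Finset.mul_sum, ← Finset.mul_sum]
    at hsum
  have hshift : ∑ j ∈ range (n + 2), (j - k) * (cb j * j.choose k * cb (n + 1 - j)) =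
      ∑ j ∈ range (n + 1),
        ((j + 1 - k) * (cb (j + 1) * (j + 1).choose k * cb (n + 1 - (j + 1)))) +
        (0 - k) * (cb 0 * Nat.choose 0 k * cb (n + 1 - 0)) :=
    Finset.sum_range_succ' _ _
  have hz : (0 - k) * (cb 0 * Nat.choose 0 k * cb (n + 1 - 0)) = 0 := by simp
  have hrw : ∀ j ∈ range (n + 1),
      (j + 1 - k) * (cb (j + 1) * (j + 1).choose k * cb (n + 1 - (j + 1))) =
      (j + 1 - k) * (cb (j + 1) * (j + 1).choose k * cb (n - j)) := by
    intro j hj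
    congr 3
    omega
  rw [hz, add_zero, Finset.sum_congr rfl hrw] at hshift
  have htop : ∑ j ∈ range (n + 2), (j - k) * (cb j * j.choose k * cb (n + 1 - j)) =
      ∑ j ∈ range (n + 1), (j - k) * (cb j * j.choose k * cb (n + 1 - j)) +
        (n + 1 - k) * (cb (n + 1) * (n + 1).choose k * cb (n + 1 - (n + 1))) :=
    Finset.sum_range_succ _ _
  have htop2 : ∑ j ∈ range (n + 2), cb j * j.choose k * cb (n + 1 - j) =
      ∑ j ∈ range (n + 1), cb j * j.choose k * cb (n + 1 - j) +
        cb (n + 1) * (n + 1).choose k * cb (n + 1 - (n + 1)) :=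
    Finset.sum_range_succ _ _
  rw [htop2, mul_add]
  linarith [hsum, hshift, htop]

private lemma key4 (n k : ℕ) :
    ∑ j ∈ range (n + 1), cb j * j.choose k * cb (n - j) =
      4 ^ (n - k) * n.choose k * cb k := by
  induction n generalizing k with
  | zero =>
    cases k <;> simp [Nat.centralBinom]
  | succ n ih =>
    rcases le_or_gt k n with hk | hk
    · have hpos : 0 < n + 1 - k := by omega
      apply Nat.eq_of_mul_eq_mul_left hpos
      rw [tele4 n k, ih k]
      have h1 : n.choose k * (n + 1) = (n + 1).choose k * (n + 1 - k) :=
        Nat.choose_mul_succ_eq n k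
      have h2 : (4 : ℕ) ^ (n + 1 - k) = 4 * 4 ^ (n - k) := by
        rw [show n + 1 - k = (n - k) + 1 by omega, pow_succ]
        ring
      rw [h2]
      zify at h1 ⊢
      linear_combination (4 * (4 ^ (n - k) : ℤ) * (cb k : ℤ)) * h1
    · rcases eq_or_lt_of_le (Nat.succ_le_of_lt hk) with heq | hlt
      · rw [Finset.sum_range_succ]
        have hz : ∑ j ∈ range (n + 1), cb j * j.choose k * cb (n + 1 - j) = 0 := by
          apply Finset.sum_eq_zero
          intro j hj
          have hjk : j < k := by have := mem_range.mp hj; omega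
          simp [Nat.choose_eq_zero_of_lt hjk]
        rw [hz, zero_add, ← heq]
        simp [Nat.centralBinom]
      · have hz : ∑ j ∈ range (n + 2), cb j * j.choose k * cb (n + 1 - j) = 0 := by
          apply Finset.sum_eq_zero
          intro j hj
          have hjk : j < k := by have := mem_range.mp hj; omega
          simp [Nat.choose_eq_zero_of_lt hjk]
        rw [hz, Nat.choose_eq_zero_of_lt hlt]
        simp

theorem stmt_4 (n : ℕ) (hn : 0 < n) (x : ℝ) :
    ∑ k ∈ Finset.range (n + 1), (n.choose k : ℝ) * ((2 * k).choose k) * (x ^ 2 - x) ^ k =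
    ∑ j ∈ Finset.range (n + 1),
      (1 - 2 * x) ^ (2 * j) * (4 : ℝ) ^ (-(n : ℤ)) * ((2 * j).choose j) *
        ((2 * (n - j)).choose (n - j)) := by
  have hcb : ∀ m : ℕ, ((2 * m).choose m : ℝ) = (cb m : ℝ) := fun m => by
    simp [Nat.centralBinom]
  set u : ℝ := x ^ 2 - x with hu
  have hbase : (1 - 2 * x) ^ 2 = 4 * u + 1 := by rw [hu]; ring
  have hRHS : ∑ j ∈ Finset.range (n + 1),
      (1 - 2 * x) ^ (2 * j) * (4 : ℝ) ^ (-(n : ℤ)) * ((2 * j).choose j : ℝ) *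
        ((2 * (n - j)).choose (n - j) : ℝ) =
      ∑ j ∈ Finset.range (n + 1), ∑ k ∈ Finset.range (n + 1),
        (4 * u) ^ k * (j.choose k : ℝ) *
          ((4 : ℝ) ^ (-(n : ℤ)) * (cb j : ℝ) * (cb (n - j) : ℝ)) := by
    refine Finset.sum_congr rfl fun j hj => ?_
    have hjn : j + 1 ≤ n + 1 := mem_range.mp hj
    have hpow : (1 - 2 * x) ^ (2 * j) = ∑ k ∈ Finset.range (j + 1),
        (4 * u) ^ k * (1 : ℝ) ^ (j - k) * (j.choose k : ℝ) := by
      rw [pow_mul, hbase, add_pow]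
    have hext : ∑ k ∈ Finset.range (j + 1),
        (4 * u) ^ k * (1 : ℝ) ^ (j - k) * (j.choose k : ℝ) =
        ∑ k ∈ Finset.range (n + 1),
        (4 * u) ^ k * (1 : ℝ) ^ (j - k) * (j.choose k : ℝ) := by
      apply Finset.sum_subset (Finset.range_subset_range.mpr hjn)
      intro k _ hk
      have hjk : j < k := by
        by_contra h
        exact hk (mem_range.mpr (by omega))
      simp [Nat.choose_eq_zero_of_lt hjk]
    rw [hpow, hext, Finset.sum_mul, Finset.sum_mul, Finset.sum_mul]
    refine Finset.sum_congr rfl fun k _ => ?_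
    rw [hcb j, hcb (n - j)]
    ring
  rw [hRHS, Finset.sum_comm]
  refine Finset.sum_congr rfl fun k hk => ?_
  have hkn : k ≤ n := Nat.lt_succ_iff.mp (mem_range.mp hk)
  have hkey : ∑ j ∈ Finset.range (n + 1), ((cb j : ℝ) * (j.choose k : ℝ) * (cb (n - j) : ℝ)) =
      (4 : ℝ) ^ (n - k) * (n.choose k : ℝ) * (cb k : ℝ) := by
    exact_mod_cast congrArg (Nat.cast : ℕ → ℝ) (key4 n k)
  have hfac : ∀ j ∈ Finset.range (n + 1),
      (4 * u) ^ k * (j.choose k : ℝ) *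
        ((4 : ℝ) ^ (-(n : ℤ)) * (cb j : ℝ) * (cb (n - j) : ℝ)) =
      (4 * u) ^ k * (4 : ℝ) ^ (-(n : ℤ)) *
        ((cb j : ℝ) * (j.choose k : ℝ) * (cb (n - j) : ℝ)) := by
    intro j _
    ring
  rw [Finset.sum_congr rfl hfac, ← Finset.mul_sum, hkey]
  have h4 : (4 : ℝ) ^ k * (4 : ℝ) ^ (-(n : ℤ)) * (4 : ℝ) ^ (n - k) = 1 := by
    have h4n : (4 : ℝ) ^ (-(n : ℤ)) = ((4 : ℝ) ^ n)⁻¹ := by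
      rw [zpow_neg, zpow_natCast]
    calc (4 : ℝ) ^ k * (4 : ℝ) ^ (-(n : ℤ)) * (4 : ℝ) ^ (n - k)
        = ((4 : ℝ) ^ (n - k) * (4 : ℝ) ^ k) * ((4 : ℝ) ^ n)⁻¹ := by rw [h4n]; ring
      _ = (4 : ℝ) ^ n * ((4 : ℝ) ^ n)⁻¹ := by rw [← pow_add, Nat.sub_add_cancel hkn]
      _ = 1 := mul_inv_cancel₀ (by positivity)
  rw [hcb k, mul_pow]
  linear_combination (-(n.choose k : ℝ) * (cb k : ℝ) * u ^ k) * h4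
end

section
/- For every positive integer n and real x, F_n(x) = ∑_{k=0}^{n} (x²−x)^k · 4^{k−n} · ∑_{j=k}^{n} C(j,k) C(2j,j) C(2n−2j, n−j). -/
open Finset

-- central binomial recurrence over ℕ, in our notation
lemma cbrec (j : ℕ) : (j+1) * ((2*(j+1)).choose (j+1)) = 2*(2*j+1)*((2*j).choose j) :=
  Nat.succ_mul_centralBinom_succ j

-- hB : (n+2)(n+1) C(n,2j) = (2j+2)(2j+1) C(n+2,2j+2)
lemma hB (n j : ℕ) : (n+2)*(n+1)*(n.choose (2*j)) = (2*j+2)*(2*j+1)*((n+2).choose (2*j+2)) := by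
  have h1 := Nat.add_one_mul_choose_eq n (2*j)
  have h2 := Nat.add_one_mul_choose_eq (n+1) (2*j+1)
  simp only [add_assoc, Nat.reduceAdd] at h2
  calc (n+2)*(n+1)*(n.choose (2*j)) = (n+2)*((n+1)*n.choose (2*j)) := by ring
    _ = (n+2)*((n+1).choose (2*j+1) * (2*j+1)) := by rw [h1]
    _ = ((n+2)*(n+1).choose (2*j+1)) * (2*j+1) := by ring
    _ = ((n+2).choose (2*j+2) * (2*j+2)) * (2*j+1) := by rw [h2]
    _ = (2*j+2)*(2*j+1)*((n+2).choose (2*j+2)) := by ring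

lemma hA (n j : ℕ) :
    ((n:ℝ)+2)^2*(((n+2).choose (2*j) : ℕ) : ℝ) + ((n:ℝ)+2)*((n:ℝ)+1)*((n.choose (2*j) : ℕ) : ℝ)
    = 4*(j:ℝ)^2*(((n+2).choose (2*j) : ℕ) : ℝ)
      + ((n:ℝ)+2)*(2*(n:ℝ)+3)*(((n+1).choose (2*j) : ℕ) : ℝ) := by
  rcases le_or_gt (2*j) n with h | h
  · have e1 : ((n:ℝ)+1)*((n.choose (2*j) : ℕ) : ℝ)
        = (((n+1).choose (2*j) : ℕ) : ℝ) * ((n:ℝ)+1-2*(j:ℝ)) := by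
      have := Nat.choose_mul_succ_eq n (2*j)
      have hc := congrArg (Nat.cast (R := ℝ)) this
      push_cast [Nat.cast_sub (by omega : 2*j ≤ n+1)] at hc
      linarith [hc]
    have e2 : ((n:ℝ)+2)*(((n+1).choose (2*j) : ℕ) : ℝ)
        = (((n+2).choose (2*j) : ℕ) : ℝ) * ((n:ℝ)+2-2*(j:ℝ)) := by
      have := Nat.choose_mul_succ_eq (n+1) (2*j)
      have hc := congrArg (Nat.cast (R := ℝ)) this
      push_cast [Nat.cast_sub (by omega : 2*j ≤ n+2)] at hc
      linarith [hc]
    linear_combination ((n:ℝ)+2)*e1 + (-(((n:ℝ)+2)+2*(j:ℝ)))*e2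
  rcases (by omega : 2*j = n+1 ∨ 2*j = n+2 ∨ n+2 < 2*j) with h1 | h1 | h1
  · have c0 : n.choose (2*j) = 0 := Nat.choose_eq_zero_of_lt (by omega)
    have c1 : (n+1).choose (2*j) = 1 := by rw [← h1]; exact Nat.choose_self _
    have c2 : (n+2).choose (2*j) = n+2 := by
      rw [show (2*j) = n+1 from h1]; exact Nat.choose_succ_self_right (n+1)
    have hj : 2*(j:ℝ) = (n:ℝ)+1 := by exact_mod_cast congrArg (fun t : ℕ => (t:ℝ)) h1
    rw [c0, c1, c2]
    push_cast
    linear_combination (-((n:ℝ)+2)*((n:ℝ)+1+2*(j:ℝ)))*hj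
  · have c0 : n.choose (2*j) = 0 := Nat.choose_eq_zero_of_lt (by omega)
    have c1 : (n+1).choose (2*j) = 0 := Nat.choose_eq_zero_of_lt (by omega)
    have c2 : (n+2).choose (2*j) = 1 := by rw [← h1]; exact Nat.choose_self _
    have hj : 2*(j:ℝ) = (n:ℝ)+2 := by exact_mod_cast congrArg (fun t : ℕ => (t:ℝ)) h1
    rw [c0, c1, c2]
    push_cast
    linear_combination (-(((n:ℝ)+2)+2*(j:ℝ)))*hj
  · have c0 : n.choose (2*j) = 0 := Nat.choose_eq_zero_of_lt (by omega)
    have c1 : (n+1).choose (2*j) = 0 := Nat.choose_eq_zero_of_lt (by omega)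
    have c2 : (n+2).choose (2*j) = 0 := Nat.choose_eq_zero_of_lt (by omega)
    rw [c0, c1, c2]
    push_cast
    ring

noncomputable def tt (e m : ℝ) (n : ℕ) : ℝ :=
  ∑ j ∈ Finset.range (n+1), ((n.choose (2*j) : ℝ) * (((2*j).choose j : ℕ) : ℝ)) * (m^j * e^(n-2*j))

noncomputable def Hj (e m : ℝ) (n j : ℕ) : ℝ :=
  4*(j:ℝ)^2 * (((n+2).choose (2*j) : ℝ) * (((2*j).choose j : ℕ) : ℝ)) * (m^j * e^(n+2-2*j))

lemma cbrecR (j : ℕ) : ((j:ℝ)+1) * (((2*(j+1)).choose (j+1) : ℕ) : ℝ)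
    = 2*(2*(j:ℝ)+1)*(((2*j).choose j : ℕ) : ℝ) := by
  have := congrArg (Nat.cast (R := ℝ)) (cbrec j)
  push_cast at this
  linarith [this]

lemma hBR (n j : ℕ) : ((n:ℝ)+2)*((n:ℝ)+1)*((n.choose (2*j) : ℕ) : ℝ)
    = (2*(j:ℝ)+2)*(2*(j:ℝ)+1)*(((n+2).choose (2*j+2) : ℕ) : ℝ) := by
  have := congrArg (Nat.cast (R := ℝ)) (hB n j)
  push_cast at this
  linarith [this]

lemma Pj (e m : ℝ) (n j : ℕ) :
    ((n:ℝ)+2)^2 * (((n+2).choose (2*j) : ℝ) * (((2*j).choose j : ℕ) : ℝ) * (m^j * e^(n+2-2*j)))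
    - ((n:ℝ)+2)*(2*(n:ℝ)+3)*e * (((n+1).choose (2*j) : ℝ) * (((2*j).choose j : ℕ) : ℝ) * (m^j * e^(n+1-2*j)))
    + ((n:ℝ)+2)*((n:ℝ)+1)*(e^2-4*m) * ((n.choose (2*j) : ℝ) * (((2*j).choose j : ℕ) : ℝ) * (m^j * e^(n-2*j)))
    = Hj e m n j - Hj e m n (j+1) := by
  have hC := cbrecR j
  have hBr := hBR n j
  rcases le_or_gt (2*j) n with h | h
  · have E2 : e^(n+2-2*j) = e^(n-2*j) * e^2 := by
      rw [show n+2-2*j = (n-2*j)+2 from by omega, pow_add]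
    have E1 : e^(n+1-2*j) = e^(n-2*j) * e := by
      rw [show n+1-2*j = (n-2*j)+1 from by omega, pow_add, pow_one]
    have E0 : e^(n+2-2*(j+1)) = e^(n-2*j) := by congr 1; omega
    simp only [Hj, E2, E1, E0, show 2*(j+1) = 2*j+2 from by ring, pow_succ]
    have hAr := hA n j
    simp only [show 2*(j+1) = 2*j+2 from by ring] at hC
    push_cast
    linear_combination (m^j * e^(n-2*j) * e^2 * (((2*j).choose j : ℕ) : ℝ)) * hAr
      - 4*m*(m^j)*(e^(n-2*j))*(((2*j).choose j : ℕ) : ℝ)*hBr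
      + 4*m*(m^j)*(e^(n-2*j))*((j:ℝ)+1)*(((n+2).choose (2*j+2) : ℕ) : ℝ)*hC
  rcases (by omega : 2*j = n+1 ∨ 2*j = n+2 ∨ n+2 < 2*j) with h1 | h1 | h1
  · have c0 : n.choose (2*j) = 0 := Nat.choose_eq_zero_of_lt (by omega)
    have c1 : (n+1).choose (2*j) = 1 := by rw [← h1]; exact Nat.choose_self _
    have c2 : (n+2).choose (2*j) = n+2 := by
      rw [show (2*j) = n+1 from h1]; exact Nat.choose_succ_self_right (n+1)
    have c3 : (n+2).choose (2*(j+1)) = 0 := Nat.choose_eq_zero_of_lt (by omega)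
    have hj : 2*(j:ℝ) = (n:ℝ)+1 := by exact_mod_cast congrArg (fun t : ℕ => (t:ℝ)) h1
    have E2 : n+2-2*j = 1 := by omega
    have E1 : n+1-2*j = 0 := by omega
    simp only [Hj, c0, c1, c2, c3, E2, E1, pow_one, pow_zero]
    push_cast
    linear_combination (-((((2*j).choose j : ℕ) : ℝ)) * m^j * e * ((n:ℝ)+2) * ((n:ℝ)+1+2*(j:ℝ))) * hj
  · have c0 : n.choose (2*j) = 0 := Nat.choose_eq_zero_of_lt (by omega)
    have c1 : (n+1).choose (2*j) = 0 := Nat.choose_eq_zero_of_lt (by omega)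
    have c2 : (n+2).choose (2*j) = 1 := by rw [← h1]; exact Nat.choose_self _
    have c3 : (n+2).choose (2*(j+1)) = 0 := Nat.choose_eq_zero_of_lt (by omega)
    have hj : 2*(j:ℝ) = (n:ℝ)+2 := by exact_mod_cast congrArg (fun t : ℕ => (t:ℝ)) h1
    have E2 : n+2-2*j = 0 := by omega
    simp only [Hj, c0, c1, c2, c3, E2, pow_zero]
    push_cast
    linear_combination (-((((2*j).choose j : ℕ) : ℝ)) * m^j * ((n:ℝ)+2+2*(j:ℝ))) * hj
  · have c0 : n.choose (2*j) = 0 := Nat.choose_eq_zero_of_lt (by omega)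
    have c1 : (n+1).choose (2*j) = 0 := Nat.choose_eq_zero_of_lt (by omega)
    have c2 : (n+2).choose (2*j) = 0 := Nat.choose_eq_zero_of_lt (by omega)
    have c3 : (n+2).choose (2*(j+1)) = 0 := Nat.choose_eq_zero_of_lt (by omega)
    simp only [Hj, c0, c1, c2, c3]
    push_cast
    ring

lemma tt_ext (e m : ℝ) (N M : ℕ) (h : N ≤ M) :
    tt e m N = ∑ j ∈ Finset.range (M+1),
      ((N.choose (2*j) : ℝ) * (((2*j).choose j : ℕ) : ℝ)) * (m^j * e^(N-2*j)) := by
  unfold tt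
  apply Finset.sum_subset (Finset.range_subset_range.2 (by omega))
  intro j hj hj2
  simp only [Finset.mem_range] at hj hj2
  rw [Nat.choose_eq_zero_of_lt (by omega : N < 2*j)]
  simp

lemma tt_rec (e m : ℝ) (n : ℕ) :
    ((n:ℝ)+2) * tt e m (n+2)
      = (2*(n:ℝ)+3)*e * tt e m (n+1) - ((n:ℝ)+1)*(e^2-4*m) * tt e m n := by
  have hmain : ((n:ℝ)+2)^2 * tt e m (n+2) - (((n:ℝ)+2)*(2*(n:ℝ)+3)*e) * tt e m (n+1)
      + (((n:ℝ)+2)*((n:ℝ)+1)*(e^2-4*m)) * tt e m n = 0 := by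
    rw [tt_ext e m (n+2) (n+2) le_rfl, tt_ext e m (n+1) (n+2) (by omega),
      tt_ext e m n (n+2) (by omega), Finset.mul_sum, Finset.mul_sum, Finset.mul_sum,
      ← Finset.sum_sub_distrib, ← Finset.sum_add_distrib]
    have hcong : ∀ j ∈ Finset.range (n+3),
        (((n:ℝ)+2)^2 * ((((n+2).choose (2*j) : ℝ)) * (((2*j).choose j : ℕ) : ℝ) * (m^j * e^(n+2-2*j)))
        - ((n:ℝ)+2)*(2*(n:ℝ)+3)*e * ((((n+1).choose (2*j) : ℝ)) * (((2*j).choose j : ℕ) : ℝ) * (m^j * e^(n+1-2*j)))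
        + ((n:ℝ)+2)*((n:ℝ)+1)*(e^2-4*m) * (((n.choose (2*j) : ℝ)) * (((2*j).choose j : ℕ) : ℝ) * (m^j * e^(n-2*j))))
        = Hj e m n j - Hj e m n (j+1) := fun j _ => Pj e m n j
    calc (∑ j ∈ Finset.range (n+3),
          (((n:ℝ)+2)^2 * ((((n+2).choose (2*j) : ℝ)) * (((2*j).choose j : ℕ) : ℝ) * (m^j * e^(n+2-2*j)))
          - ((n:ℝ)+2)*(2*(n:ℝ)+3)*e * ((((n+1).choose (2*j) : ℝ)) * (((2*j).choose j : ℕ) : ℝ) * (m^j * e^(n+1-2*j)))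
          + ((n:ℝ)+2)*((n:ℝ)+1)*(e^2-4*m) * (((n.choose (2*j) : ℝ)) * (((2*j).choose j : ℕ) : ℝ) * (m^j * e^(n-2*j)))))
        = ∑ j ∈ Finset.range (n+3), (Hj e m n j - Hj e m n (j+1)) :=
          Finset.sum_congr rfl hcong
      _ = Hj e m n 0 - Hj e m n (n+3) := Finset.sum_range_sub' (Hj e m n) (n+3)
      _ = 0 := by
          have hz : (n+2).choose (2*(n+3)) = 0 := Nat.choose_eq_zero_of_lt (by omega)
          simp [Hj, hz]
  have h2 : ((n:ℝ)+2) ≠ 0 := by positivity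
  have h3 : ((n:ℝ)+2) * (((n:ℝ)+2) * tt e m (n+2)
      - ((2*(n:ℝ)+3)*e * tt e m (n+1) - ((n:ℝ)+1)*(e^2-4*m) * tt e m n)) = 0 := by
    linear_combination hmain
  rcases mul_eq_zero.mp h3 with h4 | h4
  · exact absurd h4 h2
  · linarith [h4]

noncomputable def uf (p : ℝ) (j : ℕ) : ℝ := (((2*j).choose j : ℕ) : ℝ) * p^j

noncomputable def gg (p q : ℝ) (n : ℕ) : ℝ :=
  ∑ j ∈ Finset.range (n+1), uf p j * uf q (n-j)

lemma urec (p : ℝ) (j : ℕ) : ((j:ℝ)+1) * uf p (j+1) = 2*(2*(j:ℝ)+1)*p * uf p j := by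
  unfold uf
  have := cbrecR j
  calc ((j:ℝ)+1) * ((((2*(j+1)).choose (j+1) : ℕ) : ℝ) * p^(j+1))
      = (((j:ℝ)+1) * (((2*(j+1)).choose (j+1) : ℕ) : ℝ)) * p^(j+1) := by ring
    _ = (2*(2*(j:ℝ)+1)*(((2*j).choose j : ℕ) : ℝ)) * p^(j+1) := by rw [this]
    _ = 2*(2*(j:ℝ)+1)*p * ((((2*j).choose j : ℕ) : ℝ) * p^j) := by rw [pow_succ]; ring

lemma gg_rec (p q : ℝ) (n : ℕ) :
    ((n:ℝ)+2) * gg p q (n+2)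
      = 2*(2*(n:ℝ)+3)*(p+q) * gg p q (n+1) - 16*p*q*((n:ℝ)+1) * gg p q n := by
  have stepA : ((n:ℝ)+2) * gg p q (n+2)
      = ∑ j ∈ Finset.range (n+2),
          (2*(2*(j:ℝ)+1)*p + 2*(2*((n+1-j:ℕ):ℝ)+1)*q) * (uf p j * uf q (n+1-j)) := by
    have e1 : ((n:ℝ)+2) * gg p q (n+2)
        = (∑ j ∈ Finset.range (n+3), (j:ℝ) * (uf p j * uf q (n+2-j)))
          + ∑ j ∈ Finset.range (n+3), ((n+2-j:ℕ):ℝ) * (uf p j * uf q (n+2-j)) := by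
      unfold gg
      rw [Finset.mul_sum, ← Finset.sum_add_distrib]
      refine Finset.sum_congr rfl fun j hj => ?_
      simp only [Finset.mem_range] at hj
      have hc : ((n+2-j:ℕ):ℝ) = (n:ℝ)+2-(j:ℝ) := by
        push_cast [Nat.cast_sub (by omega : j ≤ n+2)]; ring
      rw [hc]; ring
    have e2 : (∑ j ∈ Finset.range (n+3), (j:ℝ) * (uf p j * uf q (n+2-j)))
        = ∑ j ∈ Finset.range (n+2), 2*(2*(j:ℝ)+1)*p * (uf p j * uf q (n+1-j)) := by
      rw [Finset.sum_range_succ' (fun j => (j:ℝ) * (uf p j * uf q (n+2-j))) (n+2)]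
      simp only [Nat.cast_zero, zero_mul, add_zero]
      refine Finset.sum_congr rfl fun i hi => ?_
      have hsub : n+2-(i+1) = n+1-i := by omega
      rw [hsub]
      have hu := urec p i
      push_cast
      linear_combination (uf q (n+1-i)) * hu
    have e3 : (∑ j ∈ Finset.range (n+3), ((n+2-j:ℕ):ℝ) * (uf p j * uf q (n+2-j)))
        = ∑ j ∈ Finset.range (n+2), 2*(2*((n+1-j:ℕ):ℝ)+1)*q * (uf p j * uf q (n+1-j)) := by
      rw [Finset.sum_range_succ]
      simp only [Nat.sub_self, Nat.cast_zero, zero_mul, add_zero]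
      refine Finset.sum_congr rfl fun j hj => ?_
      simp only [Finset.mem_range] at hj
      have hsub : n+2-j = (n+1-j)+1 := by omega
      rw [hsub]
      have hu := urec q (n+1-j)
      push_cast
      linear_combination (uf p j) * hu
    rw [e1, e2, e3, ← Finset.sum_add_distrib]
    refine Finset.sum_congr rfl fun j hj => ?_
    ring
  have stepB : ((n:ℝ)+2) * gg p q (n+2) - 2*(2*(n:ℝ)+3)*(p+q) * gg p q (n+1)
      = ∑ j ∈ Finset.range (n+2),
          (-(4*p*((n+1-j:ℕ):ℝ)) - 4*q*(j:ℝ)) * (uf p j * uf q (n+1-j)) := by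
    rw [stepA]
    unfold gg
    rw [Finset.mul_sum, ← Finset.sum_sub_distrib]
    refine Finset.sum_congr rfl fun j hj => ?_
    simp only [Finset.mem_range] at hj
    have hc : ((n+1-j:ℕ):ℝ) = (n:ℝ)+1-(j:ℝ) := by
      push_cast [Nat.cast_sub (by omega : j ≤ n+1)]; ring
    rw [hc]; ring
  have stepC : ∑ j ∈ Finset.range (n+2),
          (-(4*p*((n+1-j:ℕ):ℝ)) - 4*q*(j:ℝ)) * (uf p j * uf q (n+1-j))
      = -(16*p*q*((n:ℝ)+1) * gg p q n) := by
    have split : ∑ j ∈ Finset.range (n+2),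
            (-(4*p*((n+1-j:ℕ):ℝ)) - 4*q*(j:ℝ)) * (uf p j * uf q (n+1-j))
        = -((∑ j ∈ Finset.range (n+2), 4*p*((n+1-j:ℕ):ℝ) * (uf p j * uf q (n+1-j)))
            + ∑ j ∈ Finset.range (n+2), 4*q*(j:ℝ) * (uf p j * uf q (n+1-j))) := by
      rw [← Finset.sum_add_distrib]
      rw [← neg_neg (∑ j ∈ Finset.range (n+2),
        (-(4*p*((n+1-j:ℕ):ℝ)) - 4*q*(j:ℝ)) * (uf p j * uf q (n+1-j)))]
      congr 1
      rw [← Finset.sum_neg_distrib]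
      exact Finset.sum_congr rfl fun j hj => by ring
    have e4 : (∑ j ∈ Finset.range (n+2), 4*q*(j:ℝ) * (uf p j * uf q (n+1-j)))
        = ∑ j ∈ Finset.range (n+1), 8*p*q*(2*(j:ℝ)+1) * (uf p j * uf q (n-j)) := by
      rw [Finset.sum_range_succ' (fun j => 4*q*(j:ℝ) * (uf p j * uf q (n+1-j))) (n+1)]
      simp only [Nat.cast_zero, mul_zero, zero_mul, add_zero]
      refine Finset.sum_congr rfl fun i hi => ?_
      have hsub : n+1-(i+1) = n-i := by omega
      rw [hsub]
      have hu := urec p i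
      push_cast
      linear_combination (4*q*(uf q (n-i))) * hu
    have e5 : (∑ j ∈ Finset.range (n+2), 4*p*((n+1-j:ℕ):ℝ) * (uf p j * uf q (n+1-j)))
        = ∑ j ∈ Finset.range (n+1), 8*p*q*(2*((n-j:ℕ):ℝ)+1) * (uf p j * uf q (n-j)) := by
      rw [Finset.sum_range_succ]
      simp only [Nat.sub_self, Nat.cast_zero, mul_zero, zero_mul, add_zero]
      refine Finset.sum_congr rfl fun j hj => ?_
      simp only [Finset.mem_range] at hj
      have hsub : n+1-j = (n-j)+1 := by omega
      rw [hsub]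
      have hu := urec q (n-j)
      push_cast
      linear_combination (4*p*(uf p j)) * hu
    rw [split, e4, e5]
    have hXY : (∑ j ∈ Finset.range (n+1), 8*p*q*(2*((n-j:ℕ):ℝ)+1) * (uf p j * uf q (n-j)))
        + (∑ j ∈ Finset.range (n+1), 8*p*q*(2*(j:ℝ)+1) * (uf p j * uf q (n-j)))
        = 16*p*q*((n:ℝ)+1) * gg p q n := by
      unfold gg
      rw [Finset.mul_sum, ← Finset.sum_add_distrib]
      refine Finset.sum_congr rfl fun j hj => ?_
      simp only [Finset.mem_range] at hj
      have hc : ((n-j:ℕ):ℝ) = (n:ℝ)-(j:ℝ) := by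
        push_cast [Nat.cast_sub (by omega : j ≤ n)]; ring
      rw [hc]; ring
    rw [hXY]
  linarith [stepB, stepC]

lemma gg_eq_tt (p q : ℝ) : ∀ n, gg p q n = tt (2*(p+q)) ((p-q)^2) n := by
  intro n
  induction n using Nat.strong_induction_on with
  | _ n ih =>
    match n with
    | 0 => norm_num [gg, uf, tt]
    | 1 =>
      rw [gg, tt]
      simp [Finset.sum_range_succ, uf]
      norm_num
      ring
    | (n+2) =>
      have h1 := gg_rec p q n
      have h2 := tt_rec (2*(p+q)) ((p-q)^2) n
      have e1 := ih (n+1) (by omega)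
      have e2 := ih n (by omega)
      have hne : ((n:ℝ)+2) ≠ 0 := by positivity
      apply mul_left_cancel₀ hne
      rw [h1, h2, e1, e2]
      ring

lemma vander (n k : ℕ) (hk : k ≤ n) :
    (n.choose k) = ∑ j ∈ Finset.range (n+1), (k.choose j) * ((n-k).choose j) := by
  have h0 : (n.choose k) = ∑ i ∈ Finset.range (k+1), (k.choose i) * ((n-k).choose (k-i)) := by
    have := Nat.add_choose_eq k (n-k) k
    rw [Finset.Nat.sum_antidiagonal_eq_sum_range_succ_mk] at this
    rw [show k + (n-k) = n from by omega] at this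
    exact this
  have h1 : ∑ i ∈ Finset.range (k+1), (k.choose i) * ((n-k).choose (k-i))
      = ∑ i ∈ Finset.range (k+1), (k.choose i) * ((n-k).choose i) := by
    rw [← Finset.sum_range_reflect (fun i => (k.choose i) * ((n-k).choose i)) (k+1)]
    refine Finset.sum_congr rfl fun i hi => ?_
    simp only [Finset.mem_range] at hi
    have h2 : k + 1 - 1 - i = k - i := by omega
    rw [h2, Nat.choose_symm (by omega : i ≤ k)]
  have h3 : ∑ i ∈ Finset.range (k+1), (k.choose i) * ((n-k).choose i)
      = ∑ i ∈ Finset.range (n+1), (k.choose i) * ((n-k).choose i) := by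
    apply Finset.sum_subset (Finset.range_subset_range.2 (by omega))
    intro i _ hi2
    simp only [Finset.mem_range] at hi2
    rw [Nat.choose_eq_zero_of_lt (by omega : k < i)]
    simp
  rw [h0, h1, h3]

lemma disj_choose (N x y : ℕ) (h : x + y ≤ N) :
    (N.choose x) * ((N-x).choose y) = (N.choose y) * ((N-y).choose x) := by
  have h1 := Nat.choose_mul (n := N) (show x ≤ x+y from by omega)
  have h2 := Nat.choose_mul (n := N) (show y ≤ x+y from by omega)
  rw [show x+y-x = y from by omega] at h1
  rw [show x+y-y = x from by omega] at h2
  have h3 : (x+y).choose x = (x+y).choose y := Nat.choose_symm_add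
  rw [← h1, h3, h2]

lemma natid (n j i : ℕ) (h : j + j ≤ n) (hi : i ≤ n - 2*j) :
    (n.choose (j+i)) * ((j+i).choose j) * ((n-(j+i)).choose j)
      = (n.choose (2*j)) * ((2*j).choose j) * ((n-2*j).choose i) := by
  have h1 := Nat.choose_mul (n := n) (show j ≤ j+i from by omega)
  rw [show j+i-j = i from by omega] at h1
  have h2 := disj_choose (n-j) i j (by omega)
  rw [show n-j-j = n-2*j from by omega] at h2
  have h3 := Nat.choose_mul (n := n) (show j ≤ 2*j from by omega)
  rw [show 2*j-j = j from by omega] at h3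
  calc (n.choose (j+i)) * ((j+i).choose j) * ((n-(j+i)).choose j)
      = (n.choose j) * ((n-j).choose i) * ((n-j-i).choose j) := by
        rw [h1, show n-(j+i) = n-j-i from by omega]
    _ = (n.choose j) * (((n-j).choose i) * ((n-j-i).choose j)) := by ring
    _ = (n.choose j) * (((n-j).choose j) * ((n-2*j).choose i)) := by rw [h2]
    _ = ((n.choose j) * ((n-j).choose j)) * ((n-2*j).choose i) := by ring
    _ = (n.choose (2*j)) * ((2*j).choose j) * ((n-2*j).choose i) := by rw [← h3]

lemma W_eq_tt (a b : ℝ) (n : ℕ) :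
    ∑ k ∈ Finset.range (n+1), ((n.choose k : ℝ))^2 * (a^k * b^(n-k)) = tt (a+b) (a*b) n := by
  have step1 : ∑ k ∈ Finset.range (n+1), ((n.choose k : ℝ))^2 * (a^k * b^(n-k))
      = ∑ k ∈ Finset.range (n+1), ∑ j ∈ Finset.range (n+1),
          ((n.choose k : ℝ) * ((k.choose j : ℕ):ℝ) * (((n-k).choose j : ℕ):ℝ)) * (a^k * b^(n-k)) := by
    refine Finset.sum_congr rfl fun k hk => ?_
    simp only [Finset.mem_range] at hk
    rw [← Finset.sum_mul]
    congr 1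
    have hv := vander n k (by omega)
    have hvR : ((n.choose k : ℕ):ℝ)
        = ∑ j ∈ Finset.range (n+1), ((k.choose j:ℕ):ℝ) * (((n-k).choose j:ℕ):ℝ) := by
      have := congrArg (Nat.cast (R:=ℝ)) hv
      push_cast at this
      exact this
    calc ((n.choose k : ℝ))^2 = (n.choose k : ℝ) * ((n.choose k : ℕ):ℝ) := by ring
      _ = (n.choose k : ℝ) * ∑ j ∈ Finset.range (n+1), ((k.choose j:ℕ):ℝ) * (((n-k).choose j:ℕ):ℝ) := by
          rw [hvR]
      _ = ∑ j ∈ Finset.range (n+1), (n.choose k : ℝ) * ((k.choose j:ℕ):ℝ) * (((n-k).choose j:ℕ):ℝ) := by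
          rw [Finset.mul_sum]; exact Finset.sum_congr rfl fun j _ => by ring
  rw [step1, Finset.sum_comm, tt]
  refine Finset.sum_congr rfl fun j hj => ?_
  simp only [Finset.mem_range] at hj
  rcases le_or_gt (2*j) n with h | h
  · have hrestrict : ∑ k ∈ Finset.range (n+1),
        ((n.choose k : ℝ) * ((k.choose j : ℕ):ℝ) * (((n-k).choose j : ℕ):ℝ)) * (a^k * b^(n-k))
        = ∑ k ∈ Finset.Icc j (n-j),
        ((n.choose k : ℝ) * ((k.choose j : ℕ):ℝ) * (((n-k).choose j : ℕ):ℝ)) * (a^k * b^(n-k)) := by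
      refine (Finset.sum_subset ?_ ?_).symm
      · intro k hk
        simp only [Finset.mem_Icc] at hk
        simp only [Finset.mem_range]
        omega
      · intro k hk hk2
        simp only [Finset.mem_range] at hk
        simp only [Finset.mem_Icc, not_and_or, not_le] at hk2
        rcases hk2 with hlt | hgt
        · rw [Nat.choose_eq_zero_of_lt (by omega : k < j)]
          push_cast; ring
        · rw [Nat.choose_eq_zero_of_lt (by omega : n - k < j)]
          push_cast; ring
    rw [hrestrict, ← Finset.Ico_add_one_right_eq_Icc, Finset.sum_Ico_eq_sum_range,
      show n-j+1-j = n-2*j+1 from by omega]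
    rw [add_pow]
    rw [Finset.mul_sum, Finset.mul_sum]
    refine Finset.sum_congr rfl fun i hi => ?_
    simp only [Finset.mem_range] at hi
    have hnid := natid n j i (by omega) (by omega)
    have hnidR := congrArg (Nat.cast (R:=ℝ)) hnid
    push_cast at hnidR
    have ea : a^(j+i) = a^j * a^i := pow_add a j i
    have eb : b^(n-(j+i)) = b^j * b^(n-2*j-i) := by
      rw [← pow_add]; congr 1; omega
    rw [ea, eb]
    calc (n.choose (j+i) : ℝ) * ((j+i).choose j : ℕ) * (((n-(j+i)).choose j : ℕ):ℝ)
          * (a^j * a^i * (b^j * b^(n-2*j-i)))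
        = ((n.choose (j+i) : ℝ) * (((j+i).choose j : ℕ):ℝ) * (((n-(j+i)).choose j : ℕ):ℝ))
          * (a^j * a^i * (b^j * b^(n-2*j-i))) := by push_cast; ring
      _ = ((n.choose (2*j) : ℝ) * (((2*j).choose j : ℕ):ℝ) * (((n-2*j).choose i : ℕ):ℝ))
          * (a^j * a^i * (b^j * b^(n-2*j-i))) := by rw [hnidR]
      _ = (n.choose (2*j) : ℝ) * (((2*j).choose j : ℕ):ℝ)
          * ((a*b)^j * (a^i * b^(n-2*j-i) * ((n-2*j).choose i : ℕ))) := by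
          rw [mul_pow]; push_cast; ring
  · have hz : ∀ k ∈ Finset.range (n+1),
        ((n.choose k : ℝ) * ((k.choose j : ℕ):ℝ) * (((n-k).choose j : ℕ):ℝ)) * (a^k * b^(n-k)) = 0 := by
      intro k hk
      simp only [Finset.mem_range] at hk
      rcases le_or_gt j k with hjk | hjk
      · rw [Nat.choose_eq_zero_of_lt (by omega : n - k < j)]; push_cast; ring
      · rw [Nat.choose_eq_zero_of_lt (by omega : k < j)]; push_cast; ring
    rw [Finset.sum_congr rfl hz, Nat.choose_eq_zero_of_lt (by omega : n < 2*j)]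
    simp

lemma rhs_eq_gg (x : ℝ) (n : ℕ) :
    (∑ k ∈ Finset.range (n + 1),
      (x ^ 2 - x) ^ k * (4 : ℝ) ^ ((k : ℤ) - n) *
        ∑ j ∈ Finset.Icc k n,
          (j.choose k : ℝ) * ((2 * j).choose j) * ((2 * (n - j)).choose (n - j)))
    = gg (x^2-x+1/4) (1/4) n := by
  have step1 : (∑ k ∈ Finset.range (n + 1),
      (x ^ 2 - x) ^ k * (4 : ℝ) ^ ((k : ℤ) - n) *
        ∑ j ∈ Finset.Icc k n,
          (j.choose k : ℝ) * ((2 * j).choose j) * ((2 * (n - j)).choose (n - j)))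
      = ∑ k ∈ Finset.range (n + 1), ∑ j ∈ Finset.Icc k n,
          (x ^ 2 - x) ^ k * (4 : ℝ) ^ ((k : ℤ) - n) *
            ((j.choose k : ℝ) * ((2 * j).choose j) * ((2 * (n - j)).choose (n - j))) :=
    Finset.sum_congr rfl fun k _ => by rw [Finset.mul_sum]
  have step2 : ∑ k ∈ Finset.range (n + 1), ∑ j ∈ Finset.Icc k n,
          (x ^ 2 - x) ^ k * (4 : ℝ) ^ ((k : ℤ) - n) *
            ((j.choose k : ℝ) * ((2 * j).choose j) * ((2 * (n - j)).choose (n - j)))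
      = ∑ j ∈ Finset.range (n + 1), ∑ k ∈ Finset.range (j+1),
          (x ^ 2 - x) ^ k * (4 : ℝ) ^ ((k : ℤ) - n) *
            ((j.choose k : ℝ) * ((2 * j).choose j) * ((2 * (n - j)).choose (n - j))) := by
    apply Finset.sum_comm'
    intro k j
    simp only [Finset.mem_range, Finset.mem_Icc]
    omega
  rw [step1, step2, gg]
  refine Finset.sum_congr rfl fun j hj => ?_
  simp only [Finset.mem_range] at hj
  have h4 : ∀ k : ℕ, (4:ℝ) ^ ((k : ℤ) - n) = 4^k * ((4:ℝ)^n)⁻¹ := by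
    intro k
    rw [zpow_sub₀ (by norm_num : (4:ℝ) ≠ 0), zpow_natCast, zpow_natCast]
    ring
  have hbin : (4*(x^2-x)+1)^j
      = ∑ k ∈ Finset.range (j+1), (4*(x^2-x))^k * 1^(j-k) * (j.choose k : ℝ) := add_pow _ _ _
  have hsum : ∑ k ∈ Finset.range (j+1),
          (x ^ 2 - x) ^ k * (4 : ℝ) ^ ((k : ℤ) - n) *
            ((j.choose k : ℝ) * ((2 * j).choose j) * ((2 * (n - j)).choose (n - j)))
      = (((2 * j).choose j : ℝ) * ((2 * (n - j)).choose (n - j)) * ((4:ℝ)^n)⁻¹)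
          * (4*(x^2-x)+1)^j := by
    rw [hbin, Finset.mul_sum]
    refine Finset.sum_congr rfl fun k hk => ?_
    rw [h4 k, mul_pow]
    ring
  rw [hsum]
  unfold uf
  have hpow : (4:ℝ)^n = 4^j * 4^(n-j) := by
    rw [← pow_add]; congr 1; omega
  have hp : (x^2-x+1/4)^j = (4*(x^2-x)+1)^j / 4^j := by
    rw [show x^2-x+1/4 = (4*(x^2-x)+1)/4 from by ring, div_pow]
  have hq : ((1:ℝ)/4)^(n-j) = 1 / 4^(n-j) := by
    rw [div_pow]; norm_num
  rw [hp, hq, hpow]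
  have h1 : (4:ℝ)^j ≠ 0 := by positivity
  have h2 : (4:ℝ)^(n-j) ≠ 0 := by positivity
  field_simp

theorem stmt_6 (n : ℕ) (hn : 0 < n) (x : ℝ) :
    ∑ k ∈ Finset.range (n + 1), ((n.choose k : ℝ) * x ^ k * (1 - x) ^ (n - k)) ^ 2 =
    ∑ k ∈ Finset.range (n + 1),
      (x ^ 2 - x) ^ k * (4 : ℝ) ^ ((k : ℤ) - n) *
        ∑ j ∈ Finset.Icc k n,
          (j.choose k : ℝ) * ((2 * j).choose j) * ((2 * (n - j)).choose (n - j)) := by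
  have hL : ∑ k ∈ Finset.range (n + 1), ((n.choose k : ℝ) * x ^ k * (1 - x) ^ (n - k)) ^ 2
      = ∑ k ∈ Finset.range (n+1), ((n.choose k : ℝ))^2 * ((x^2)^k * ((1-x)^2)^(n-k)) := by
    refine Finset.sum_congr rfl fun k _ => ?_
    rw [mul_pow, mul_pow, ← pow_mul, ← pow_mul, ← pow_mul', ← pow_mul']
    ring
  rw [hL, W_eq_tt (x^2) ((1-x)^2) n,
    show x^2+(1-x)^2 = 2*((x^2-x+1/4)+(1/4)) from by ring,
    show x^2*(1-x)^2 = ((x^2-x+1/4)-(1/4))^2 from by ring,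
    ← gg_eq_tt]
  exact (rhs_eq_gg x n).symm
end

section
/- For every positive integer n and real x ≥ 0, G_n(x) = ∑_{j=0}^{n−1} (1+2x)^{2j−2n+1} · 4^{−j} · C(n−1,j) · ∑_{i=0}^{n−j−1} (−1/4)^i C(n−j−1,i) C(2i+2j, i+j). -/
open Finset Polynomial

lemma vand_range (m n c : ℕ) :
    (m + n).choose c = ∑ q ∈ range (c+1), m.choose q * n.choose (c - q) := by
  rw [Nat.add_choose_eq, Finset.Nat.sum_antidiagonal_eq_sum_range_succ_mk]

lemma inner_q (a q : ℕ) (hq : q ≤ a) :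
    ∑ i ∈ range (a+1), (a.choose i)^2 * (i.choose q) =
      a.choose q * (2*a - q).choose (a - q) := by
  have h1 : ∑ i ∈ range (a+1), (a.choose i)^2 * (i.choose q)
      = ∑ i ∈ Ico q (a+1), (a.choose i)^2 * (i.choose q) := by
    refine (Finset.sum_subset ?_ ?_).symm
    · intro i hi; simp only [mem_Ico, mem_range] at hi ⊢; omega
    · intro i hi hni
      have hlt : i < q := by simp only [mem_Ico, mem_range] at hi hni; omega
      simp [Nat.choose_eq_zero_of_lt hlt]
  rw [h1, Finset.sum_Ico_eq_sum_range]
  have h2 : ∀ r ∈ range (a + 1 - q), (a.choose (q+r))^2 * ((q+r).choose q)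
      = a.choose q * ((a-q).choose r * a.choose ((a-q) - r)) := by
    intro r hr
    simp only [mem_range] at hr
    have hra : q + r ≤ a := by omega
    have h3 := Nat.choose_mul (n := a) (Nat.le_add_right q r)
    have h4 : q + r - q = r := by omega
    rw [h4] at h3
    have h5 : a.choose ((a-q) - r) = a.choose (q+r) := by
      have : (a - q) - r = a - (q + r) := by omega
      rw [this, Nat.choose_symm hra]
    rw [h5]; rw [pow_two, mul_assoc, h3]; ring
  rw [Finset.sum_congr rfl h2, ← Finset.mul_sum]
  congr 1
  have h6 : (2*a - q) = (a - q) + a := by omega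
  have h7 : a + 1 - q = (a - q) + 1 := by omega
  rw [h6, vand_range (a-q) a (a-q), h7]

lemma lemF (a k : ℕ) :
    ∑ i ∈ range (a+1), (a.choose i)^2 * ((a+k+i).choose (2*a)) = ((a+k).choose a)^2 := by
  have step1 : ∀ i, (a+k+i).choose (2*a)
      = ∑ q ∈ range (2*a+1), i.choose q * (a+k).choose (2*a - q) := by
    intro i
    rw [show a+k+i = i + (a+k) by ring, vand_range]
  simp only [step1, Finset.mul_sum]
  rw [Finset.sum_comm]
  have step3 : ∑ q ∈ range (2*a+1), ∑ i ∈ range (a+1),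
        (a.choose i)^2 * (i.choose q * (a+k).choose (2*a - q))
      = ∑ q ∈ range (a+1), ∑ i ∈ range (a+1),
        (a.choose i)^2 * (i.choose q * (a+k).choose (2*a - q)) := by
    refine (Finset.sum_subset ?_ ?_).symm
    · intro q hq; simp only [mem_range] at hq ⊢; omega
    · intro q hq hnq
      have haq : a < q := by simp only [mem_range] at hq hnq; omega
      refine Finset.sum_eq_zero fun i hi => ?_
      have : i < q := by simp only [mem_range] at hi; omega
      simp [Nat.choose_eq_zero_of_lt this]
  rw [step3]
  have step4 : ∀ q ∈ range (a+1), ∑ i ∈ range (a+1),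
        (a.choose i)^2 * (i.choose q * (a+k).choose (2*a - q))
      = (a.choose q * ((a+k).choose a * k.choose (a - q))) := by
    intro q hq
    simp only [mem_range] at hq
    have hq' : q ≤ a := by omega
    have : ∑ i ∈ range (a+1), (a.choose i)^2 * (i.choose q * (a+k).choose (2*a - q))
        = (∑ i ∈ range (a+1), (a.choose i)^2 * (i.choose q)) * (a+k).choose (2*a - q) := by
      rw [Finset.sum_mul]; exact Finset.sum_congr rfl fun i _ => by ring
    rw [this, inner_q a q hq']
    have hsymm : (2*a - q).choose (a - q) = (2*a - q).choose a := by
      have h8 : a ≤ 2*a - q := by omega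
      have : 2*a - q - a = a - q := by omega
      rw [← this, Nat.choose_symm h8]
    rw [hsymm]
    by_cases hc : 2*a - q ≤ a + k
    · have h9 := Nat.choose_mul (n := a + k) (by omega : a ≤ 2*a - q)
      have e1 : a + k - a = k := by omega
      have e2 : 2*a - q - a = a - q := by omega
      rw [e1, e2] at h9
      rw [mul_assoc, mul_comm ((2*a - q).choose a), h9]
    · have z1 : (a+k).choose (2*a - q) = 0 := Nat.choose_eq_zero_of_lt (by omega)
      have z2 : k.choose (a - q) = 0 := Nat.choose_eq_zero_of_lt (by omega)
      rw [z1, z2]; ring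
  rw [Finset.sum_congr rfl step4]
  have : ∑ q ∈ range (a+1), a.choose q * ((a+k).choose a * k.choose (a - q))
      = (a+k).choose a * ∑ q ∈ range (a+1), a.choose q * k.choose (a - q) := by
    rw [Finset.mul_sum]; exact Finset.sum_congr rfl fun q _ => by ring
  rw [this, ← vand_range a k a, pow_two]

lemma lemFj (a k : ℕ) :
    ∑ j ∈ range (a+1), (a.choose j)^2 * ((2*a + k - j).choose (2*a)) = ((a+k).choose a)^2 := by
  rw [← Finset.sum_range_reflect, ← lemF a k]
  refine Finset.sum_congr rfl fun i hi => ?_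
  simp only [mem_range] at hi
  have h1 : a + 1 - 1 - i = a - i := by omega
  have h2 : 2*a + k - (a - i) = a + k + i := by omega
  rw [h1, h2, Nat.choose_symm (by omega : i ≤ a)]

lemma lemE (a : ℕ) {z : ℝ} (hz0 : 0 ≤ z) (hz1 : z < 1) :
    ∑' k : ℕ, (((a+k).choose a : ℝ))^2 * z^k
      = (∑ j ∈ range (a+1), ((a.choose j : ℝ))^2 * z^j) * (1/(1-z))^(2*a+1) := by
  have hnorm : ‖z‖ < 1 := by rw [Real.norm_eq_abs, abs_of_nonneg hz0]; exact hz1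
  have Sgeom : Summable (fun r : ℕ => (((r + 2*a).choose (2*a) : ℕ) : ℝ) * z^r) :=
    summable_choose_mul_geometric_of_norm_lt_one (2*a) hnorm
  have hinj : ∀ j : ℕ, Function.Injective (fun r : ℕ => j + r) :=
    fun j => add_right_injective j
  have hsupp : ∀ j : ℕ, j ≤ a → Function.support (fun k : ℕ => ((2*a + k - j).choose (2*a) : ℝ) * z^k)
      ⊆ Set.range (fun r : ℕ => j + r) := by
    intro j hj k hk
    by_contra hc
    have hkj : k < j := by
      simp only [Set.mem_range, not_exists] at hc
      by_contra h
      push_neg at h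
      exact hc (k - j) (by omega)
    apply hk
    have hz : (2*a + k - j).choose (2*a) = 0 := Nat.choose_eq_zero_of_lt (by omega)
    simp [hz]
  have hsummand : ∀ j : ℕ, j ≤ a → Summable (fun k : ℕ => ((2*a + k - j).choose (2*a) : ℝ) * z^k) := by
    intro j hj
    rw [← Function.Injective.summable_iff (hinj j) (fun k hk => by_contra fun hne => hk (hsupp j hj hne))]
    refine (Sgeom.mul_right (z^j)).congr fun r => ?_
    show ((r + 2*a).choose (2*a) : ℝ) * z^r * z^j
        = ((2*a + (j + r) - j).choose (2*a) : ℝ) * z^(j+r)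
    have h1 : 2*a + (j + r) - j = r + 2*a := by omega
    rw [h1, pow_add]
    ring
  have hshift : ∀ j : ℕ, j ≤ a → (∑' k : ℕ, ((2*a + k - j).choose (2*a) : ℝ) * z^k)
      = z^j * ∑' r : ℕ, (((r + 2*a).choose (2*a)) : ℝ) * z^r := by
    intro j hj
    rw [← Function.Injective.tsum_eq (hinj j) (hsupp j hj), ← tsum_mul_left]
    congr 1
    funext r
    show ((2*a + (j + r) - j).choose (2*a) : ℝ) * z^(j+r)
        = z^j * (((r + 2*a).choose (2*a) : ℝ) * z^r)
    have h1 : 2*a + (j + r) - j = r + 2*a := by omega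
    rw [h1, pow_add]
    ring
  have hgeo : ∑' r : ℕ, (((r + 2*a).choose (2*a)) : ℝ) * z^r = 1/(1-z)^(2*a+1) :=
    tsum_choose_mul_geometric_of_norm_lt_one (2*a) hnorm
  calc ∑' k : ℕ, (((a+k).choose a : ℝ))^2 * z^k
      = ∑' k : ℕ, ∑ j ∈ range (a+1),
          ((a.choose j : ℝ))^2 * (((2*a + k - j).choose (2*a) : ℝ) * z^k) := by
        refine tsum_congr fun k => ?_
        have hcast : (((a+k).choose a : ℝ))^2
            = ∑ j ∈ range (a+1), ((a.choose j : ℝ))^2 * ((2*a + k - j).choose (2*a) : ℝ) := by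
          exact_mod_cast congrArg (Nat.cast : ℕ → ℝ) (lemFj a k).symm
        rw [hcast, Finset.sum_mul]
        exact Finset.sum_congr rfl fun j _ => by ring
    _ = ∑ j ∈ range (a+1), ∑' k : ℕ,
          ((a.choose j : ℝ))^2 * (((2*a + k - j).choose (2*a) : ℝ) * z^k) :=
        Summable.tsum_finsetSum fun j hj => ((hsummand j (by simp only [mem_range] at hj; omega)).mul_left _)
    _ = ∑ j ∈ range (a+1), ((a.choose j : ℝ))^2 * (z^j * (1/(1-z)^(2*a+1))) := by
        refine Finset.sum_congr rfl fun j hj => ?_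
        simp only [mem_range] at hj
        rw [tsum_mul_left, hshift j (by omega), hgeo]
    _ = (∑ j ∈ range (a+1), ((a.choose j : ℝ))^2 * z^j) * (1/(1-z))^(2*a+1) := by
        rw [Finset.sum_mul, div_pow, one_pow]
        exact Finset.sum_congr rfl fun j _ => by ring


lemma coeff_linear_pow (b d : ℝ) (a t : ℕ) :
    ((C b + C d * X : Polynomial ℝ)^a).coeff t
      = (a.choose t : ℝ) * d^t * b^(a-t) := by
  rw [add_comm (C b) (C d * X), add_pow, finset_sum_coeff]
  have hterm : ∀ k ∈ range (a+1),
      ((C d * X : Polynomial ℝ)^k * C b^(a-k) * (a.choose k : Polynomial ℝ)).coeff t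
        = (if k = t then (a.choose k : ℝ) * d^k * b^(a-k) else 0) := by
    intro k _
    rw [mul_pow, ← C_pow, ← C_pow, ← C_eq_natCast]
    rw [show (C (d^k) * X^k * C (b^(a-k)) * C ((a.choose k : ℝ)) : Polynomial ℝ)
        = C ((a.choose k : ℝ) * d^k * b^(a-k)) * X^k by
      rw [C_mul, C_mul]; ring]
    rw [coeff_C_mul, coeff_X_pow]
    by_cases h : t = k
    · subst h; simp
    · rw [if_neg h, if_neg (fun hh => h hh.symm), mul_zero]
  rw [Finset.sum_congr rfl hterm, Finset.sum_ite_eq']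
  by_cases ht : t ∈ range (a+1)
  · simp [ht]
  · simp only [ht, if_false]
    have : a < t := by simp only [mem_range] at ht; omega
    simp [Nat.choose_eq_zero_of_lt this]

lemma lemP (a : ℕ) (v : ℝ) :
    ∑ j ∈ range (a+1), ((a.choose j : ℝ))^2 * v^(2*j) * (1+v)^(2*(a-j))
      = ∑ m ∈ range (a+1), ((a.choose m : ℝ)) * (((2*m).choose m : ℝ)) * (v*(1+v))^m := by
  have hQfact : ((C (1+v) + C v * X) * (C v + C (1+v) * X) : Polynomial ℝ)
      = C (v*(1+v)) * (1+X)^2 + X := by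
    simp only [C_add, C_mul, C_1]
    ring
  have key : (((C (1+v) + C v * X : Polynomial ℝ))^a * ((C v + C (1+v) * X))^a).coeff a
      = ((C (v*(1+v)) * (1+X)^2 + X : Polynomial ℝ)^a).coeff a := by
    rw [← mul_pow, hQfact]
  have lhs_eq : (((C (1+v) + C v * X : Polynomial ℝ))^a * ((C v + C (1+v) * X))^a).coeff a
      = ∑ j ∈ range (a+1), ((a.choose j : ℝ))^2 * v^(2*j) * (1+v)^(2*(a-j)) := by
    rw [coeff_mul, Finset.Nat.sum_antidiagonal_eq_sum_range_succ_mk]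
    refine Finset.sum_congr rfl fun j hj => ?_
    simp only [mem_range] at hj
    rw [coeff_linear_pow, coeff_linear_pow]
    rw [Nat.choose_symm (by omega : j ≤ a)]
    have h1 : a - (a - j) = j := by omega
    rw [h1]
    rw [two_mul, two_mul, pow_add, pow_add]
    ring
  have rhs_eq : ((C (v*(1+v)) * (1+X)^2 + X : Polynomial ℝ)^a).coeff a
      = ∑ m ∈ range (a+1), ((a.choose m : ℝ)) * (((2*m).choose m : ℝ)) * (v*(1+v))^m := by
    rw [add_pow, finset_sum_coeff]
    refine Finset.sum_congr rfl fun m hm => ?_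
    simp only [mem_range] at hm
    rw [show ((C (v*(1+v)) * (1+X)^2)^m * X^(a-m) * (a.choose m : Polynomial ℝ) : Polynomial ℝ)
        = (C ((v*(1+v))^m * (a.choose m : ℝ)) * (1+X)^(2*m)) * X^(a-m) by
      rw [mul_pow, ← C_pow, ← C_eq_natCast, C_mul, pow_mul]; ring]
    rw [coeff_mul_X_pow', if_pos (by omega : a - m ≤ a)]
    have h2 : a - (a - m) = m := by omega
    rw [h2, coeff_C_mul]
    have h3 : ((1 + X : Polynomial ℝ)^(2*m)).coeff m = ((2*m).choose m : ℝ) := by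
      rw [add_comm (1 : Polynomial ℝ) X, coeff_X_add_one_pow]
    rw [h3]
    ring
  rw [← lhs_eq, key, rhs_eq]


lemma lemC (a : ℕ) (u : ℝ) :
    ∑ m ∈ range (a+1), ((a.choose m : ℝ)) * (((2*m).choose m : ℝ)) * (u - 1/4)^m
      = ∑ j ∈ range (a+1), u^j * ((a.choose j : ℝ)) *
          ∑ i ∈ range (a - j + 1),
            (-1/4 : ℝ)^i * (((a-j).choose i : ℝ)) * (((2*i+2*j).choose (i+j) : ℝ)) := by
  have hstep1 : ∀ m ∈ range (a+1),
      ((a.choose m : ℝ)) * (((2*m).choose m : ℝ)) * (u - 1/4)^m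
      = ∑ j ∈ range (m+1),
          (((a.choose (j+(m-j)) * (j+(m-j)).choose j : ℕ) : ℝ))
            * (((2*(m-j)+2*j).choose ((m-j)+j) : ℝ)) * u^j * (-1/4 : ℝ)^(m-j) := by
    intro m _
    rw [show u - 1/4 = u + (-1/4 : ℝ) by ring, add_pow, Finset.mul_sum]
    refine Finset.sum_congr rfl fun j hj => ?_
    simp only [mem_range] at hj
    have e1 : j + (m - j) = m := by omega
    have e2 : 2*(m-j)+2*j = 2*m := by omega
    have e3 : (m-j)+j = m := by omega
    rw [e1, e2, e3]
    push_cast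
    ring
  rw [Finset.sum_congr rfl hstep1,
    Finset.sum_range_diag_flip (a+1) (fun j i =>
      (((a.choose (j+i) * (j+i).choose j : ℕ) : ℝ))
        * (((2*i+2*j).choose (i+j) : ℝ)) * u^j * (-1/4 : ℝ)^i)]
  refine Finset.sum_congr rfl fun j hj => ?_
  simp only [mem_range] at hj
  have e4 : a + 1 - j = (a - j) + 1 := by omega
  rw [e4, Finset.mul_sum]
  refine Finset.sum_congr rfl fun i hi => ?_
  simp only [mem_range] at hi
  have h5 := Nat.choose_mul (n := a) (Nat.le_add_right j i)
  have e6 : j + i - j = i := by omega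
  rw [e6] at h5
  rw [h5]
  push_cast
  ring


theorem stmt_8 (n : ℕ) (hn : 0 < n) (x : ℝ) (hx : 0 ≤ x) :
    ∑' k : ℕ, (((n + k - 1).choose k : ℝ) * x ^ k * ((1 + x) ^ (n + k))⁻¹) ^ 2 =
    ∑ j ∈ Finset.range n,
      (1 + 2 * x) ^ (2 * (j : ℤ) - 2 * n + 1) * (4 : ℝ) ^ (-(j : ℤ)) * ((n - 1).choose j : ℝ) *
        ∑ i ∈ Finset.range (n - j - 1 + 1),
          (-1/4 : ℝ) ^ i * ((n - j - 1).choose i) * ((2 * i + 2 * j).choose (i + j)) := by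
  obtain ⟨a, rfl⟩ : ∃ a, n = a + 1 := ⟨n - 1, by omega⟩
  have hX : (0:ℝ) < 1 + x := by linarith
  have hw : (0:ℝ) < 1 + 2*x := by linarith
  have hXne : (1+x : ℝ) ≠ 0 := ne_of_gt hX
  have hwne : (1+2*x : ℝ) ≠ 0 := ne_of_gt hw
  have hz0 : (0:ℝ) ≤ x^2/(1+x)^2 := div_nonneg (sq_nonneg x) (sq_nonneg _)
  have hz1 : x^2/(1+x)^2 < 1 := by
    rw [div_lt_one (by positivity)]
    nlinarith
  have hterm : ∀ k : ℕ, ((((a+1) + k - 1).choose k : ℝ) * x^k * ((1+x)^((a+1)+k))⁻¹)^2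
      = (((a+k).choose a : ℝ))^2 * (x^2/(1+x)^2)^k / ((1+x)^(2*a+2)) := by
    intro k
    have e1 : (a+1) + k - 1 = a + k := by omega
    rw [e1, ← Nat.choose_symm_add]
    rw [div_pow, ← pow_mul, ← pow_mul]
    field_simp
    ring
  rw [tsum_congr hterm, tsum_div_const, lemE a hz0 hz1]
  have h1z : (1:ℝ) - x^2/(1+x)^2 = (1+2*x)/(1+x)^2 := by
    field_simp
    ring
  rw [h1z, one_div_div]
  have hLHS : (∑ j ∈ range (a+1), ((a.choose j:ℝ))^2 * (x^2/(1+x)^2)^j)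
        * ((1+x)^2/(1+2*x))^(2*a+1) / (1+x)^(2*a+2)
      = (1/(1+2*x))^(2*a+1)
        * ∑ j ∈ range (a+1), ((a.choose j:ℝ))^2 * x^(2*j) * (1+x)^(2*(a-j)) := by
    rw [Finset.sum_mul, Finset.sum_div, Finset.mul_sum]
    refine Finset.sum_congr rfl fun j hj => ?_
    simp only [mem_range] at hj
    obtain ⟨d, rfl⟩ : ∃ d, a = j + d := ⟨a - j, by omega⟩
    rw [show j + d - j = d from by omega]
    simp only [div_pow, ← pow_mul, one_pow]
    field_simp
    ring
  rw [hLHS, lemP a x, show x*(1+x) = (1+2*x)^2/4 - 1/4 from by ring,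
    lemC a ((1+2*x)^2/4), Finset.mul_sum]
  refine Finset.sum_congr rfl fun j hj => ?_
  simp only [mem_range] at hj
  have e7 : a + 1 - 1 = a := by omega
  have e8 : a + 1 - j - 1 = a - j := by omega
  rw [e7, e8]
  have hzp : (1+2*x) ^ (2*(j:ℤ) - 2*((a+1 : ℕ):ℤ) + 1)
      = (1+2*x)^(2*j) / (1+2*x)^(2*a+1) := by
    rw [show (2*(j:ℤ) - 2*((a+1 : ℕ):ℤ) + 1) = ((2*j:ℕ):ℤ) - ((2*a+1 : ℕ):ℤ) from by
      push_cast; ring]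
    rw [zpow_sub₀ hwne, zpow_natCast, zpow_natCast]
  rw [hzp, zpow_neg, zpow_natCast,
    show ((1+2*x)^2/4 : ℝ)^j = (1+2*x)^(2*j) / 4^j from by
      rw [div_pow, ← pow_mul]]
  have h4 : (4:ℝ)^j ≠ 0 := by positivity
  have hwp : ((1+2*x):ℝ)^(2*a+1) ≠ 0 := pow_ne_zero _ hwne
  field_simp
  rw [div_pow, one_pow]
  field_simp
end

section
/- For every positive integer n and every x ≥ 0, the function K_n(x) := ∑_{k=0}^{∞} ( e^{−nx} (nx)^k / k! )² satisfies the differential equation x·K_n''(x) + (4nx+1)·K_n'(x) + 2n·K_n(x) = 0 on (0,∞). -/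
open scoped Nat

noncomputable def g0 (y : ℝ) : ℝ := ∑' k : ℕ, y ^ (2*k) / (k.factorial : ℝ)^2
noncomputable def g1 (y : ℝ) : ℝ :=
  ∑' k : ℕ, ((2*k : ℕ) : ℝ) * y ^ (2*k-1) / (k.factorial : ℝ)^2
noncomputable def g2 (y : ℝ) : ℝ :=
  ∑' k : ℕ, ((2*k*(2*k-1) : ℕ) : ℝ) * y ^ (2*k-2) / (k.factorial : ℝ)^2

lemma le_four_pow (k : ℕ) : ((k:ℝ)+1)^2 ≤ 4^k := by
  induction k with
  | zero => norm_num
  | succ k ih =>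
      push_cast
      have h4 : (0:ℝ) < 4^k := by positivity
      have hk : (0:ℝ) ≤ (k:ℝ) := by positivity
      calc ((k:ℝ)+1+1)^2 ≤ 4*((k:ℝ)+1)^2 := by nlinarith
        _ ≤ 4*4^k := by nlinarith
        _ = 4^(k+1) := by ring

lemma summable_aux (R : ℝ) : Summable (fun k : ℕ => 4 * (4*R^2)^k / (k.factorial : ℝ)) := by
  have := (Real.summable_pow_div_factorial (4*R^2)).mul_left 4
  simpa [mul_div_assoc] using this

lemma term_bound (R : ℝ) (hR : 1 ≤ R) (y : ℝ) (hy : |y| ≤ R) (k m : ℕ) (c : ℝ)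
    (hc0 : 0 ≤ c) (hc : c ≤ 4*4^k) (hm : m ≤ 2*k) :
    |c * y ^ m / (k.factorial : ℝ)^2| ≤ 4 * (4*R^2)^k / (k.factorial : ℝ) := by
  have hR0 : (0:ℝ) ≤ R := le_trans zero_le_one hR
  have hfac1 : (1:ℝ) ≤ (k.factorial : ℝ) := by exact_mod_cast k.factorial_pos
  have hfac : (k.factorial : ℝ) ≤ (k.factorial : ℝ)^2 := by nlinarith
  have hym : |y| ^ m ≤ R ^ (2*k) :=
    le_trans (pow_le_pow_left₀ (abs_nonneg y) hy m) (pow_le_pow_right₀ hR hm)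
  have h1 : |c * y ^ m / (k.factorial : ℝ)^2| = c * |y| ^ m / (k.factorial : ℝ)^2 := by
    simp [abs_div, abs_mul, abs_pow, abs_of_nonneg hc0, Nat.abs_cast]
  rw [h1]
  calc c * |y| ^ m / (k.factorial : ℝ)^2 ≤ (4*4^k) * R^(2*k) / (k.factorial : ℝ) := by
        have hfac0 : (0:ℝ) < (k.factorial : ℝ) := by positivity
        exact div_le_div₀ (by positivity)
          (mul_le_mul hc hym (pow_nonneg (abs_nonneg y) m) (by positivity)) hfac0 hfac
    _ = 4 * (4*R^2)^k / (k.factorial : ℝ) := by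
        rw [pow_mul, mul_assoc, ← mul_pow]

lemma summable_term (y : ℝ) (c : ℕ → ℕ) (m : ℕ → ℕ)
    (hc : ∀ k, ((c k : ℕ) : ℝ) ≤ 4*4^k) (hm : ∀ k, m k ≤ 2*k) :
    Summable (fun k : ℕ => ((c k : ℕ) : ℝ) * y ^ (m k) / (k.factorial : ℝ)^2) := by
  set R := |y| + 1 with hRdef
  have hR : 1 ≤ R := by rw [hRdef]; linarith [abs_nonneg y]
  have hy : |y| ≤ R := by rw [hRdef]; linarith
  apply Summable.of_abs
  apply Summable.of_nonneg_of_le (fun k => abs_nonneg _) _ (summable_aux R)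
  intro k
  exact term_bound R hR y hy k (m k) _ (by positivity) (hc k) (hm k)

lemma coeff_bound1 (k : ℕ) : ((2*k : ℕ) : ℝ) ≤ 4*4^k := by
  have h := le_four_pow k
  push_cast
  nlinarith [sq_nonneg ((k:ℝ) - 1)]

lemma coeff_bound2 (k : ℕ) : ((2*k*(2*k-1) : ℕ) : ℝ) ≤ 4*4^k := by
  have h := le_four_pow k
  have h2 : (2*k*(2*k-1) : ℕ) ≤ 4*k^2 :=
    calc 2*k*(2*k-1) ≤ 2*k*(2*k) := Nat.mul_le_mul_left _ (Nat.sub_le _ _)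
      _ = 4*k^2 := by ring
  calc ((2*k*(2*k-1) : ℕ) : ℝ) ≤ ((4*k^2 : ℕ) : ℝ) := by exact_mod_cast h2
    _ = 4*(k:ℝ)^2 := by push_cast; ring
    _ ≤ 4*4^k := by have hk : (0:ℝ) ≤ (k:ℝ) := Nat.cast_nonneg k; nlinarith

lemma coeff_bound0 (k : ℕ) : ((1 : ℕ) : ℝ) ≤ 4*4^k := by
  have : (1:ℝ) ≤ 4^k := one_le_pow₀ (by norm_num)
  push_cast; linarith

lemma summable_g0 (y : ℝ) : Summable (fun k : ℕ => y ^ (2*k) / (k.factorial : ℝ)^2) := by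
  have := summable_term y (fun _ => 1) (fun k => 2*k) coeff_bound0 (fun k => le_refl _)
  simpa using this

lemma summable_g1 (y : ℝ) :
    Summable (fun k : ℕ => ((2*k : ℕ) : ℝ) * y ^ (2*k-1) / (k.factorial : ℝ)^2) :=
  summable_term y (fun k => 2*k) (fun k => 2*k-1) coeff_bound1 (fun k => Nat.sub_le _ _)

lemma summable_g2 (y : ℝ) :
    Summable (fun k : ℕ => ((2*k*(2*k-1) : ℕ) : ℝ) * y ^ (2*k-2) / (k.factorial : ℝ)^2) :=
  summable_term y (fun k => 2*k*(2*k-1)) (fun k => 2*k-2) coeff_bound2 (fun k => Nat.sub_le _ _)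

lemma hg0 (y : ℝ) : HasDerivAt g0 (g1 y) y := by
  set R := |y| + 1 with hRdef
  have hR : 1 ≤ R := by rw [hRdef]; linarith [abs_nonneg y]
  have hmem : y ∈ Metric.ball (0:ℝ) R := by
    simp only [Metric.mem_ball, Real.dist_eq, sub_zero, hRdef]
    linarith [abs_nonneg y]
  apply hasDerivAt_tsum_of_isPreconnected (summable_aux R) Metric.isOpen_ball
    (convex_ball (0:ℝ) R).isPreconnected
    (g := fun k z => z ^ (2*k) / (k.factorial : ℝ)^2)
    (g' := fun k z => ((2*k : ℕ) : ℝ) * z ^ (2*k-1) / (k.factorial : ℝ)^2)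
    _ _ hmem (summable_g0 y) hmem
  · intro k z _
    exact (hasDerivAt_pow (2*k) z).div_const _
  · intro k z hz
    rw [Metric.mem_ball, Real.dist_eq, sub_zero] at hz
    rw [Real.norm_eq_abs]
    exact term_bound R hR z hz.le k (2*k-1) _ (by positivity) (coeff_bound1 k) (by omega)

lemma hg1 (y : ℝ) : HasDerivAt g1 (g2 y) y := by
  set R := |y| + 1 with hRdef
  have hR : 1 ≤ R := by rw [hRdef]; linarith [abs_nonneg y]
  have hmem : y ∈ Metric.ball (0:ℝ) R := by
    simp only [Metric.mem_ball, Real.dist_eq, sub_zero, hRdef]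
    linarith [abs_nonneg y]
  apply hasDerivAt_tsum_of_isPreconnected (summable_aux R) Metric.isOpen_ball
    (convex_ball (0:ℝ) R).isPreconnected
    (g := fun k z => ((2*k : ℕ) : ℝ) * z ^ (2*k-1) / (k.factorial : ℝ)^2)
    (g' := fun k z => ((2*k*(2*k-1) : ℕ) : ℝ) * z ^ (2*k-2) / (k.factorial : ℝ)^2)
    _ _ hmem (summable_g1 y) hmem
  · intro k z _
    have h := ((hasDerivAt_pow (2*k-1) z).const_mul (((2*k : ℕ)):ℝ)).div_const
      ((k.factorial : ℝ)^2)
    refine h.congr_deriv (Eq.symm ?_)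
    have e : 2*k-1-1 = 2*k-2 := by omega
    rw [e]
    push_cast [Nat.cast_sub]
    rcases Nat.eq_zero_or_pos k with hk | hk
    · subst hk; norm_num
    · have : (1:ℕ) ≤ 2*k := by omega
      push_cast [Nat.cast_sub this]
      ring
  · intro k z hz
    rw [Metric.mem_ball, Real.dist_eq, sub_zero] at hz
    rw [Real.norm_eq_abs]
    exact term_bound R hR z hz.le k (2*k-2) _ (by positivity) (coeff_bound2 k) (by omega)

lemma hODE (y : ℝ) : y * g2 y + g1 y = (4*y) * g0 y := by
  rw [g0, g1, g2, ← tsum_mul_left, ← tsum_mul_left,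
    ← ((summable_g2 y).mul_left y).tsum_add (summable_g1 y)]
  rw [(((summable_g2 y).mul_left y).add (summable_g1 y)).tsum_eq_zero_add]
  simp only [Nat.mul_zero, Nat.zero_mul, Nat.cast_zero, zero_mul, pow_zero]
  norm_num
  apply tsum_congr
  intro k
  have e2 : 2*(k+1)-2 = 2*k := by omega
  have e1 : 2*(k+1)-1 = 2*k+1 := by omega
  have e3 : 2*(k+1)*(2*(k+1)-1) = (2*k+2)*(2*k+1) := by rw [e1]; ring
  simp only [e2, e1, e3, Nat.factorial_succ]
  have hk : ((k.factorial : ℝ)) ≠ 0 := by exact_mod_cast k.factorial_ne_zero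
  have hk1 : ((k:ℝ)+1) ≠ 0 := by positivity
  push_cast
  rw [pow_succ]
  field_simp
  ring

theorem stmt_9 (n : ℕ) (hn : 0 < n)
    (K : ℝ → ℝ)
    (hK : ∀ x : ℝ, K x = Real.exp (-2 * n * x) * ∑' k : ℕ, (n * x) ^ (2 * k) / (k.factorial : ℝ) ^ 2)
    (x : ℝ) (hx : 0 ≤ x) :
    x * iteratedDeriv 2 K x + (4 * n * x + 1) * deriv K x + 2 * n * K x = 0 := by
  have hKfun : K = fun x => Real.exp (-2 * n * x) * g0 (n * x) := by
    funext z; rw [hK z]; rfl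
  have hexp : ∀ z : ℝ, HasDerivAt (fun z => Real.exp (-2 * (n:ℝ) * z))
      (-2 * n * Real.exp (-2 * n * z)) z := by
    intro z
    have h : HasDerivAt (fun z : ℝ => -2 * (n:ℝ) * z) (-2 * n) z := by
      simpa using (hasDerivAt_id z).const_mul (-2 * (n:ℝ))
    simpa [mul_comm] using h.exp
  have hcomp0 : ∀ z : ℝ, HasDerivAt (fun z => g0 ((n:ℝ) * z)) (g1 (n*z) * n) z := by
    intro z
    have h : HasDerivAt (fun z : ℝ => (n:ℝ) * z) (n:ℝ) z := by
      simpa using (hasDerivAt_id z).const_mul (n:ℝ)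
    exact (hg0 ((n:ℝ)*z)).comp z h
  have hcomp1 : ∀ z : ℝ, HasDerivAt (fun z => g1 ((n:ℝ) * z)) (g2 (n*z) * n) z := by
    intro z
    have h : HasDerivAt (fun z : ℝ => (n:ℝ) * z) (n:ℝ) z := by
      simpa using (hasDerivAt_id z).const_mul (n:ℝ)
    exact (hg1 ((n:ℝ)*z)).comp z h
  have hK1 : ∀ z : ℝ, HasDerivAt K
      (Real.exp (-2*n*z) * ((n:ℝ) * g1 (n*z) - 2*n*g0 (n*z))) z := by
    intro z
    rw [hKfun]
    have h := (hexp z).mul (hcomp0 z)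
    refine h.congr_deriv (Eq.symm ?_)
    ring
  have hderivK : deriv K = fun z =>
      Real.exp (-2*n*z) * ((n:ℝ) * g1 (n*z) - 2*n*g0 (n*z)) := by
    funext z; exact (hK1 z).deriv
  have hK2 : HasDerivAt (fun z => Real.exp (-2*(n:ℝ)*z) * ((n:ℝ) * g1 (n*z) - 2*n*g0 (n*z)))
      (Real.exp (-2*n*x) * ((n:ℝ)^2 * g2 (n*x) - 4*n^2*g1 (n*x) + 4*n^2*g0 (n*x))) x := by
    have hin : HasDerivAt (fun z => (n:ℝ) * g1 (n*z) - 2*n*g0 (n*z))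
        ((n:ℝ) * (g2 (n*x) * n) - 2*n*(g1 (n*x) * n)) x :=
      ((hcomp1 x).const_mul (n:ℝ)).sub ((hcomp0 x).const_mul (2*(n:ℝ)))
    have h := (hexp x).mul hin
    refine h.congr_deriv (Eq.symm ?_)
    ring
  have h2 : iteratedDeriv 2 K x =
      Real.exp (-2*n*x) * ((n:ℝ)^2 * g2 (n*x) - 4*n^2*g1 (n*x) + 4*n^2*g0 (n*x)) := by
    rw [iteratedDeriv_succ, iteratedDeriv_one, hderivK]
    exact hK2.deriv
  have hode := hODE ((n:ℝ)*x)
  rw [h2, hderivK, hK x]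
  have hg0x : (∑' k : ℕ, ((n:ℝ) * x) ^ (2 * k) / (k.factorial : ℝ) ^ 2) = g0 ((n:ℝ)*x) := rfl
  rw [hg0x]
  linear_combination (Real.exp (-2*(n:ℝ)*x) * (n:ℝ)) * hode
end

section
/- For every positive integer n, every integer j ≥ 0, and every x ≥ 0, the j-th derivative of K_n satisfies K_n^{(j)}(x) = (2/π) · 4^j · (−n)^j · ∫_0^{π/2} e^{−4nx·(sin t)²} (sin t)^{2j} dt. -/
open Real MeasureTheory intervalIntegral Metric

lemma wallis_prod (k : ℕ) : ∏ i ∈ Finset.range k, ((2*(i:ℝ)+1)/(2*i+2)) =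
    ((2*k).factorial : ℝ) / ((4:ℝ)^k * ((k.factorial : ℝ))^2) := by
  induction k with
  | zero => simp
  | succ k ih =>
    rw [Finset.prod_range_succ, ih]
    have h1 : ((k.factorial : ℝ)) ≠ 0 := Nat.cast_ne_zero.mpr k.factorial_ne_zero
    have h2 : ((4:ℝ)^k) ≠ 0 := by positivity
    rw [show 2*(k+1) = (2*k+1)+1 by ring]
    simp only [Nat.factorial_succ]
    push_cast
    field_simp
    ring

lemma cos_pow_halfsplit (m : ℕ) : ∫ u in (0:ℝ)..π, Real.cos u ^ m
    = (1 + (-1:ℝ)^m) * ∫ u in (0:ℝ)..(π/2), Real.cos u ^ m := by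
  have h1 : ∫ u in (π/2:ℝ)..π, Real.cos u ^ m = (-1:ℝ)^m * ∫ u in (0:ℝ)..(π/2), Real.cos u ^ m := by
    have := intervalIntegral.integral_comp_sub_left (a := (0:ℝ)) (b := π/2)
      (fun u => Real.cos u ^ m) π
    rw [show π - π/2 = π/2 by ring, sub_zero] at this
    rw [← this]
    rw [← intervalIntegral.integral_const_mul]
    congr 1; funext x
    rw [Real.cos_pi_sub]
    rw [neg_pow]
  have h2 : IntervalIntegrable (fun u => Real.cos u ^ m) volume 0 (π/2) :=
    (continuous_cos.pow m).intervalIntegrable _ _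
  have h3 : IntervalIntegrable (fun u => Real.cos u ^ m) volume (π/2) π :=
    (continuous_cos.pow m).intervalIntegrable _ _
  rw [← intervalIntegral.integral_add_adjacent_intervals h2 h3, h1]
  ring


lemma sin_pow_halfsplit (m : ℕ) : ∫ u in (0:ℝ)..π, Real.sin u ^ m
    = 2 * ∫ u in (0:ℝ)..(π/2), Real.sin u ^ m := by
  have h1 : ∫ u in (π/2:ℝ)..π, Real.sin u ^ m = ∫ u in (0:ℝ)..(π/2), Real.sin u ^ m := by
    have := intervalIntegral.integral_comp_sub_left (a := (0:ℝ)) (b := π/2)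
      (fun u => Real.sin u ^ m) π
    rw [show π - π/2 = π/2 by ring, sub_zero] at this
    rw [← this]
    congr 1; funext x
    rw [Real.sin_pi_sub]
  have h2 : IntervalIntegrable (fun u => Real.sin u ^ m) volume 0 (π/2) :=
    (continuous_sin.pow m).intervalIntegrable _ _
  have h3 : IntervalIntegrable (fun u => Real.sin u ^ m) volume (π/2) π :=
    (continuous_sin.pow m).intervalIntegrable _ _
  rw [← intervalIntegral.integral_add_adjacent_intervals h2 h3, h1]
  ring

lemma cos_sin_quarter (m : ℕ) : ∫ u in (0:ℝ)..(π/2), Real.cos u ^ m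
    = ∫ u in (0:ℝ)..(π/2), Real.sin u ^ m := by
  have := intervalIntegral.integral_comp_sub_left (a := (0:ℝ)) (b := π/2)
    (fun u => Real.sin u ^ m) (π/2)
  rw [sub_self, sub_zero] at this
  rw [← this]
  congr 1; funext x
  rw [Real.sin_pi_div_two_sub]

lemma cos_pow_odd (k : ℕ) : ∫ u in (0:ℝ)..π, Real.cos u ^ (2*k+1) = 0 := by
  rw [cos_pow_halfsplit]
  simp [pow_succ, pow_mul]

lemma cos_pow_even (k : ℕ) : ∫ u in (0:ℝ)..π, Real.cos u ^ (2*k)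
    = π * (((2*k).factorial : ℝ) / ((4:ℝ)^k * ((k.factorial : ℝ))^2)) := by
  have h := integral_sin_pow_even (n := k)
  have hw : ∏ i ∈ Finset.range k, ((2*(i:ℝ)+1)/(2*i+2)) =
      ((2*k).factorial : ℝ) / ((4:ℝ)^k * ((k.factorial : ℝ))^2) := wallis_prod k
  rw [cos_pow_halfsplit, cos_sin_quarter]
  have h2 := sin_pow_halfsplit (2*k)
  rw [pow_mul, neg_one_sq, one_pow]
  rw [show (1:ℝ) + 1 = 2 by norm_num, ← h2, h, hw]


lemma series_summable (c : ℝ) : Summable (fun k : ℕ => c^(2*k)/((k.factorial:ℝ))^2) := by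
  have hg : Summable (fun k : ℕ => (c^2)^k / (k.factorial : ℝ)) :=
    Real.summable_pow_div_factorial _
  refine Summable.of_nonneg_of_le (fun k => by rw [pow_mul]; positivity) (fun k => ?_) hg
  rw [pow_mul]
  have h1 : (1:ℝ) ≤ (k.factorial : ℝ) := by exact_mod_cast k.factorial_pos
  gcongr
  exact le_self_pow₀ h1 two_ne_zero

lemma integral_F_odd (c : ℝ) (k : ℕ) :
    ∫ u in Set.Ioc (0:ℝ) π, (2*c*Real.cos u)^(2*k+1) / ((2*k+1).factorial : ℝ) = 0 := by
  rw [← intervalIntegral.integral_of_le pi_pos.le]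
  have : ∀ u : ℝ, (2*c*Real.cos u)^(2*k+1) / ((2*k+1).factorial : ℝ)
      = (2*c)^(2*k+1) / ((2*k+1).factorial : ℝ) * Real.cos u ^ (2*k+1) := by
    intro u; rw [mul_pow]; ring
  simp only [this]
  rw [intervalIntegral.integral_const_mul, cos_pow_odd, mul_zero]

lemma integral_F_even (c : ℝ) (k : ℕ) :
    ∫ u in Set.Ioc (0:ℝ) π, (2*c*Real.cos u)^(2*k) / ((2*k).factorial : ℝ)
      = π * (c^(2*k) / ((k.factorial : ℝ))^2) := by
  rw [← intervalIntegral.integral_of_le pi_pos.le]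
  have : ∀ u : ℝ, (2*c*Real.cos u)^(2*k) / ((2*k).factorial : ℝ)
      = (2*c)^(2*k) / ((2*k).factorial : ℝ) * Real.cos u ^ (2*k) := by
    intro u; rw [mul_pow]; ring
  simp only [this]
  rw [intervalIntegral.integral_const_mul, cos_pow_even]
  have h4 : ((2:ℝ)*c)^(2*k) = 4^k * c^(2*k) := by
    rw [pow_mul, pow_mul, show ((2:ℝ)*c)^2 = 4 * c^2 by ring, mul_pow]
  have hf1 : (((2*k).factorial : ℝ)) ≠ 0 := Nat.cast_ne_zero.mpr (2*k).factorial_ne_zero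
  have hf2 : ((k.factorial : ℝ)) ≠ 0 := Nat.cast_ne_zero.mpr k.factorial_ne_zero
  rw [h4]
  field_simp

set_option maxHeartbeats 1000000 in
lemma series_eq_integral (c : ℝ) :
    π * ∑' k : ℕ, c^(2*k)/((k.factorial:ℝ))^2 = ∫ u in (0:ℝ)..π, Real.exp (2*c*Real.cos u) := by
  have hle : (0:ℝ) ≤ π := pi_pos.le
  set F : ℕ → ℝ → ℝ := fun m u => (2*c*Real.cos u)^m / m.factorial with hF
  have hexp : ∀ u : ℝ, Real.exp (2*c*Real.cos u) = ∑' m : ℕ, F m u := by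
    intro u
    rw [Real.exp_eq_exp_ℝ, NormedSpace.exp_eq_tsum_div]
  have hint : ∀ m : ℕ, Integrable (F m) (volume.restrict (Set.Ioc (0:ℝ) π)) := by
    intro m
    exact (Continuous.integrableOn_Ioc (by fun_prop))
  have hbound : ∀ m : ℕ, ∀ u : ℝ, ‖F m u‖ ≤ (2*|c|)^m / m.factorial := by
    intro m u
    have h0 : |2*c*Real.cos u| ≤ 2*|c| := by
      calc |2*c*Real.cos u| = |2*c| * |Real.cos u| := abs_mul _ _
        _ ≤ |2*c| * 1 := by gcongr; exact Real.abs_cos_le_one u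
        _ = 2 * |c| := by rw [mul_one, abs_mul]; norm_num
    simp only [hF, norm_div, norm_pow, Real.norm_eq_abs, Nat.abs_cast]
    gcongr
  have hsummable : Summable fun m : ℕ => ∫ u in Set.Ioc (0:ℝ) π, ‖F m u‖ := by
    have hg : Summable fun m : ℕ => (2*|c|)^m / (m.factorial:ℝ) * π :=
      (Real.summable_pow_div_factorial (2*|c|)).mul_right π
    refine Summable.of_nonneg_of_le
      (fun m => integral_nonneg (fun u => norm_nonneg _)) (fun m => ?_) hg
    calc ∫ u in Set.Ioc (0:ℝ) π, ‖F m u‖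
        ≤ ∫ _ in Set.Ioc (0:ℝ) π, (2*|c|)^m / (m.factorial:ℝ) :=
          integral_mono (hint m).norm (integrable_const _) (fun u => hbound m u)
      _ = (2*|c|)^m / (m.factorial:ℝ) * π := by
          rw [setIntegral_const]
          simp [Real.volume_Ioc, ENNReal.toReal_ofReal hle, mul_comm, hle]
  have hswap : ∑' m : ℕ, (∫ u in Set.Ioc (0:ℝ) π, F m u)
      = ∫ u in Set.Ioc (0:ℝ) π, ∑' m : ℕ, F m u :=
    integral_tsum_of_summable_integral_norm hint hsummable
  rw [intervalIntegral.integral_of_le hle]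
  calc π * ∑' k : ℕ, c^(2*k)/((k.factorial:ℝ))^2
      = ∑' m : ℕ, (∫ u in Set.Ioc (0:ℝ) π, F m u) := ?_
    _ = ∫ u in Set.Ioc (0:ℝ) π, Real.exp (2*c*Real.cos u) := by
        rw [hswap]; exact setIntegral_congr_fun measurableSet_Ioc (fun u _ => (hexp u).symm)
  have hse : Summable fun k : ℕ => ∫ u in Set.Ioc (0:ℝ) π, F (2*k) u := by
    simp only [hF, integral_F_even]
    exact (series_summable c).mul_left π
  have hso : Summable fun k : ℕ => ∫ u in Set.Ioc (0:ℝ) π, F (2*k+1) u := by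
    simp only [hF, integral_F_odd]
    exact summable_zero
  have heo : (∑' k : ℕ, ∫ u in Set.Ioc (0:ℝ) π, F (2*k) u)
      + (∑' k : ℕ, ∫ u in Set.Ioc (0:ℝ) π, F (2*k+1) u)
      = ∑' m : ℕ, ∫ u in Set.Ioc (0:ℝ) π, F m u := tsum_even_add_odd (f := fun m => ∫ u in Set.Ioc (0:ℝ) π, F m u) hse hso
  rw [← heo]
  simp only [hF, integral_F_even, integral_F_odd]
  rw [tsum_zero, add_zero, tsum_mul_left]



lemma exp_series_int (c : ℝ) :
    Real.exp (-2*c) * ∑' k : ℕ, c^(2*k)/((k.factorial:ℝ))^2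
      = (2/π) * ∫ t in (0:ℝ)..(π/2), Real.exp (-4*c*Real.sin t^2) := by
  have hsub : ∫ t in (0:ℝ)..(π/2), Real.exp (2*c*Real.cos (2*t))
      = (1/2) * ∫ u in (0:ℝ)..π, Real.exp (2*c*Real.cos u) := by
    have := intervalIntegral.integral_comp_mul_left (a := (0:ℝ)) (b := π/2)
      (fun u => Real.exp (2*c*Real.cos u)) (c := (2:ℝ)) two_ne_zero
    rw [mul_zero, show (2:ℝ) * (π/2) = π by ring] at this
    rw [this, smul_eq_mul]
    norm_num
  have hpt : ∀ t : ℝ, Real.exp (-4*c*Real.sin t^2)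
      = Real.exp (-2*c) * Real.exp (2*c*Real.cos (2*t)) := by
    intro t
    rw [← Real.exp_add]
    congr 1
    rw [Real.cos_two_mul, Real.cos_sq']
    ring
  have h2 : ∫ t in (0:ℝ)..(π/2), Real.exp (-4*c*Real.sin t^2)
      = Real.exp (-2*c) * ∫ t in (0:ℝ)..(π/2), Real.exp (2*c*Real.cos (2*t)) := by
    rw [← intervalIntegral.integral_const_mul]
    apply intervalIntegral.integral_congr
    intro t _
    exact hpt t
  rw [h2, hsub, ← series_eq_integral c]
  have hπ : (π:ℝ) ≠ 0 := pi_ne_zero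
  field_simp


lemma hasDeriv_G (b : ℝ) (j : ℕ) (x : ℝ) :
    HasDerivAt (fun y => ∫ t in (0:ℝ)..(π/2), Real.exp (-4*b*y*Real.sin t^2) * Real.sin t^(2*j))
      ((-4*b) * ∫ t in (0:ℝ)..(π/2), Real.exp (-4*b*x*Real.sin t^2) * Real.sin t^(2*(j+1))) x := by
  set F : ℝ → ℝ → ℝ := fun y t => Real.exp (-4*b*y*Real.sin t^2) * Real.sin t^(2*j) with hF
  set F' : ℝ → ℝ → ℝ :=
    fun y t => Real.exp (-4*b*y*Real.sin t^2) * (-4*b*Real.sin t^2) * Real.sin t^(2*j) with hF'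
  have hcont : ∀ y : ℝ, Continuous (F y) := fun y => by fun_prop
  have hcont' : ∀ y : ℝ, Continuous (F' y) := fun y => by fun_prop
  have key := intervalIntegral.hasDerivAt_integral_of_dominated_loc_of_deriv_le
    (F := F) (F' := F') (x₀ := x) (a := (0:ℝ)) (b := π/2) (μ := volume)
    (bound := fun _ => 4*|b| * Real.exp (4 * |b| * (|x| + 1)))
    (s := ball x 1) (ball_mem_nhds x one_pos)
    (Filter.Eventually.of_forall fun y => (hcont y).aestronglyMeasurable)
    ((hcont x).intervalIntegrable _ _)
    ((hcont' x).aestronglyMeasurable)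
    ?_ (intervalIntegrable_const) ?_
  · obtain ⟨-, hd⟩ := key
    refine hd.congr_deriv ?_
    symm
    rw [← intervalIntegral.integral_const_mul]
    apply intervalIntegral.integral_congr
    intro t _
    simp only [hF']
    rw [show 2*(j+1) = 2*j + 2 by ring, pow_add]
    ring
  · refine Filter.Eventually.of_forall fun t _ y hy => ?_
    have hsin2 : Real.sin t^2 ≤ 1 := by
      rw [← Real.sin_sq_add_cos_sq t]; nlinarith [sq_nonneg (Real.cos t)]
    have hsin0 : (0:ℝ) ≤ Real.sin t^2 := sq_nonneg _
    have hy' : |y| ≤ |x| + 1 := by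
      have := mem_ball_iff_norm.mp hy
      have h2 := abs_sub_abs_le_abs_sub y x
      rw [Real.norm_eq_abs] at this
      linarith
    have hexp : Real.exp (-4*b*y*Real.sin t^2) ≤ Real.exp (4 * |b| * (|x| + 1)) := by
      apply Real.exp_le_exp.mpr
      calc -4*b*y*Real.sin t^2 ≤ |(-4*b*y)*Real.sin t^2| := le_abs_self _
        _ = (4 * |b| * |y|) * Real.sin t^2 := by
            rw [abs_mul, abs_of_nonneg hsin0, abs_mul, abs_mul]; norm_num
        _ ≤ (4 * |b| * (|x| + 1)) * 1 := by
            apply mul_le_mul _ hsin2 hsin0 (by positivity)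
            gcongr
        _ = 4 * |b| * (|x| + 1) := mul_one _
    have habs_sin : |Real.sin t| ^ (2*j) ≤ 1 :=
      pow_le_one₀ (abs_nonneg _) (Real.abs_sin_le_one t)
    simp only [hF', Real.norm_eq_abs, abs_mul, Real.abs_exp, abs_pow]
    have e1 : |(-4:ℝ)| * |b| * |Real.sin t| ^ 2 ≤ 4 * |b| := by
      rw [← abs_pow, abs_of_nonneg hsin0, show |(-4:ℝ)| = 4 by norm_num]
      calc 4 * |b| * Real.sin t^2 ≤ 4 * |b| * 1 := by gcongr
        _ = 4 * |b| := mul_one _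
    calc Real.exp (-4*b*y*Real.sin t^2) * (|(-4:ℝ)| * |b| * |Real.sin t| ^ 2) * |Real.sin t| ^ (2*j)
        ≤ Real.exp (4 * |b| * (|x| + 1)) * (4 * |b|) * 1 :=
          mul_le_mul (mul_le_mul hexp e1 (by positivity) (Real.exp_nonneg _)) habs_sin
            (by positivity) (by positivity)
      _ = 4 * |b| * Real.exp (4 * |b| * (|x| + 1)) := by ring
  · refine Filter.Eventually.of_forall fun t _ y _ => ?_
    have h1 : HasDerivAt (fun y : ℝ => -4*b*y*Real.sin t^2) (-4*b*Real.sin t^2) y := by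
      have := ((hasDerivAt_id y).const_mul (-4*b)).mul_const (Real.sin t^2)
      simpa using this
    simpa only [hF, hF'] using (h1.exp).mul_const (Real.sin t^(2*j))


open Real in
theorem stmt_10 (n : ℕ) (hn : 0 < n) (j : ℕ)
    (K : ℝ → ℝ)
    (hK : ∀ x : ℝ, K x = Real.exp (-2 * n * x) * ∑' k : ℕ, (n * x) ^ (2 * k) / (k.factorial : ℝ) ^ 2)
    (x : ℝ) (hx : 0 ≤ x) :
    iteratedDeriv j K x =
      (2 / π) * 4 ^ j * (-(n : ℝ)) ^ j *
        ∫ t in (0 : ℝ)..(π / 2), Real.exp (-4 * n * x * Real.sin t ^ 2) * Real.sin t ^ (2 * j) := by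
  set b : ℝ := (n : ℝ) with hb
  set G : ℕ → ℝ → ℝ :=
    fun i y => ∫ t in (0:ℝ)..(π/2), Real.exp (-4*b*y*Real.sin t^2) * Real.sin t^(2*i) with hG
  have hGd : ∀ (i : ℕ) (y : ℝ), HasDerivAt (G i) ((-4*b) * G (i+1) y) y :=
    fun i y => hasDeriv_G b i y
  have key : ∀ (i jj : ℕ),
      iteratedDeriv i (fun y => (2/π) * G jj y) = fun y => (2/π) * (-4*b)^i * G (jj+i) y := by
    intro i
    induction i with
    | zero =>
      intro jj; funext y
      simp [iteratedDeriv_zero]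
    | succ i ih =>
      intro jj; funext y
      rw [iteratedDeriv_succ, ih jj]
      have hd : HasDerivAt (fun y => (2/π) * (-4*b)^i * G (jj+i) y)
          ((2/π) * (-4*b)^i * ((-4*b) * G (jj+i+1) y)) y := by
        have := (hGd (jj+i) y).const_mul ((2/π) * (-4*b)^i)
        simpa [mul_assoc] using this
      rw [hd.deriv]
      rw [pow_succ, show jj + (i+1) = jj + i + 1 by ring]
      ring
  have hKeq : K = fun y => (2/π) * G 0 y := by
    funext y
    rw [hK y]
    have h0 : Real.exp (-2 * (n:ℝ) * y) = Real.exp (-2 * ((n:ℝ)*y)) :=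
      congrArg Real.exp (by ring)
    have h1 : G 0 y = ∫ t in (0:ℝ)..(π/2), Real.exp (-4*((n:ℝ)*y)*Real.sin t^2) := by
      apply intervalIntegral.integral_congr
      intro t _
      show Real.exp (-4*b*y*Real.sin t^2) * Real.sin t^(2*0) = _
      rw [mul_zero, pow_zero, mul_one]
      exact congrArg Real.exp (by ring)
    rw [h0, h1, ← exp_series_int ((n:ℝ)*y)]
  rw [hKeq, key j 0]
  simp only [Nat.zero_add]
  rw [show ((-4:ℝ)*b)^j = 4^j * (-(n:ℝ))^j by rw [hb, show ((-4:ℝ))*(n:ℝ) = 4 * (-(n:ℝ)) by ring, mul_pow]]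
  rw [hG]
  ring
end

section
/- For every positive integer n and every integer j ≥ 0, the j-th derivative of K_n at 0 equals K_n^{(j)}(0) = (−n)^j · C(2j, j). -/
open Finset Polynomial


lemma coeff_2X1 (r i : ℕ) :
    ((2 * X + 1 : Polynomial ℝ) ^ r).coeff i = 2 ^ i * r.choose i := by
  have h : (2 * X + 1 : Polynomial ℝ) = C 2 * (X + C 2⁻¹) := by
    have : (C 2 : Polynomial ℝ) = 2 := map_ofNat C 2
    rw [mul_add, ← C_mul, this]
    norm_num
  rw [h, mul_pow, ← C_pow, coeff_C_mul, coeff_X_add_C_pow]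
  rcases le_or_gt i r with hir | hir
  · obtain ⟨d, rfl⟩ : ∃ d, r = i + d := ⟨r - i, by omega⟩
    rw [Nat.add_sub_cancel_left, pow_add]
    field_simp
    rw [← mul_pow]; norm_num
  · rw [Nat.choose_eq_zero_of_lt hir]
    norm_num

lemma keyPoly (m : ℕ) : ((2 * m).choose m : ℝ) =
    ∑ k ∈ range (m + 1), (m.choose k : ℝ) *
      (if 2 * k ≤ m then 2 ^ (m - 2 * k) * ((m - k).choose (m - 2 * k) : ℝ) else 0) := by
  have h1 : ((X + 1 : Polynomial ℝ) ^ (2 * m)).coeff m = ((2 * m).choose m : ℝ) :=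
    coeff_X_add_one_pow ℝ (2 * m) m
  have h2 : (X + 1 : Polynomial ℝ) ^ (2 * m) = (X ^ 2 + (2 * X + 1)) ^ m := by
    rw [pow_mul]; congr 1; ring
  rw [h2, add_pow, finset_sum_coeff] at h1
  rw [← h1]
  refine Finset.sum_congr rfl fun k hk => ?_
  rw [show ((X:Polynomial ℝ) ^ 2) ^ k * (2 * X + 1) ^ (m - k) * (m.choose k : Polynomial ℝ)
      = ((2 * X + 1) ^ (m - k) * (m.choose k : Polynomial ℝ)) * X ^ (2 * k) from by
        rw [← pow_mul]; ring,
    coeff_mul_X_pow', ← C_eq_natCast, coeff_mul_C, coeff_2X1]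
  split_ifs with hcond
  · ring
  · ring


lemma natKey {m k : ℕ} (h : 2 * k ≤ m) :
    m.choose k * ((m - k).choose (m - 2 * k)) *
      (k.factorial * k.factorial * (m - 2 * k).factorial) = m.factorial := by
  have hk : k ≤ m := by omega
  have hk2 : k ≤ m - k := by omega
  have e1 : (m - k).choose (m - 2 * k) = (m - k).choose k := by
    rw [show m - 2 * k = (m - k) - k by omega]
    exact Nat.choose_symm hk2
  have e2 : (m - k).choose k * k.factorial * ((m - k) - k).factorial = (m - k).factorial :=
    Nat.choose_mul_factorial_mul_factorial hk2
  have e3 : m.choose k * k.factorial * (m - k).factorial = m.factorial :=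
    Nat.choose_mul_factorial_mul_factorial hk
  rw [e1, show m - 2 * k = m - k - k by omega, ← e3, ← e2]
  ring

lemma keyReal (m : ℕ) (t : ℝ) :
    ∑ k ∈ range (m + 1), (if 2 * k ≤ m then
        t ^ (2 * k) / ((k.factorial : ℝ)) ^ 2 * ((-2 * t) ^ (m - 2 * k) / ((m - 2 * k).factorial : ℝ))
      else 0)
      = (-1) ^ m * ((2 * m).choose m : ℝ) * t ^ m / m.factorial := by
  have hterm : ∀ k ∈ range (m + 1), (if 2 * k ≤ m then
        t ^ (2 * k) / ((k.factorial : ℝ)) ^ 2 * ((-2 * t) ^ (m - 2 * k) / ((m - 2 * k).factorial : ℝ))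
      else 0) =
      ((m.choose k : ℝ) *
        (if 2 * k ≤ m then 2 ^ (m - 2 * k) * ((m - k).choose (m - 2 * k) : ℝ) else 0)) *
        ((-1) ^ m * t ^ m / m.factorial) := by
    intro k _
    split_ifs with h
    · have hcast : (m.choose k : ℝ) * ((m - k).choose (m - 2 * k) : ℝ) *
          ((k.factorial : ℝ) * (k.factorial : ℝ) * ((m - 2 * k).factorial : ℝ))
          = (m.factorial : ℝ) := by exact_mod_cast congrArg (Nat.cast (R := ℝ)) (natKey h)
      have htpow : t ^ (2 * k) * (-2 * t) ^ (m - 2 * k)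
          = (-1) ^ m * 2 ^ (m - 2 * k) * t ^ m := by
        have h1 : t ^ (2 * k) * t ^ (m - 2 * k) = t ^ m := by
          rw [← pow_add]; congr 1; omega
        have h2 : ((-1 : ℝ)) ^ (m - 2 * k) = (-1) ^ m := by
          have e : ((-1 : ℝ)) ^ (m - 2 * k) * (-1) ^ (2 * k) = (-1) ^ m := by
            rw [← pow_add]; congr 1; omega
          have : ((-1 : ℝ)) ^ (2 * k) = 1 := by
            rw [pow_mul]; norm_num
          rwa [this, mul_one] at e
        calc t ^ (2 * k) * (-2 * t) ^ (m - 2 * k)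
            = ((-1) ^ (m - 2 * k) * 2 ^ (m - 2 * k)) * (t ^ (2 * k) * t ^ (m - 2 * k)) := by
              rw [show (-2 * t : ℝ) = (-1) * 2 * t by ring, mul_pow, mul_pow]; ring
          _ = (-1) ^ m * 2 ^ (m - 2 * k) * t ^ m := by rw [h1, h2]
      have hA : ((k.factorial : ℝ)) ≠ 0 := Nat.cast_ne_zero.mpr k.factorial_ne_zero
      have hB : (((m - 2 * k).factorial : ℝ)) ≠ 0 := Nat.cast_ne_zero.mpr (m - 2 * k).factorial_ne_zero
      have hM : ((m.factorial : ℝ)) ≠ 0 := Nat.cast_ne_zero.mpr m.factorial_ne_zero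
      rw [div_mul_div_comm, htpow, pow_two]
      field_simp
      linear_combination (-(t ^ m)) * hcast
    · simp
  rw [Finset.sum_congr rfl hterm, ← Finset.sum_mul, ← keyPoly]
  ring


lemma sum_even_reindex (m : ℕ) (F : ℕ → ℝ) (hF : ∀ l, ¬ Even l → F l = 0) :
    ∑ l ∈ range (m + 1), F l = ∑ k ∈ range (m + 1), if 2 * k ≤ m then F (2 * k) else 0 := by
  rw [← Finset.sum_filter]
  rw [← Finset.sum_filter_of_ne (s := range (m + 1)) (p := fun l => Even l)
    (fun x _ hx => by by_contra hc; exact hx (hF x hc))]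
  refine Finset.sum_nbij' (fun l => l / 2) (fun k => 2 * k) ?_ ?_ ?_ ?_ ?_
  · intro l hl
    simp only [mem_filter, mem_range] at hl ⊢
    obtain ⟨r, hr⟩ := hl.2
    try dsimp only
    omega
  · intro k hk
    simp only [mem_filter, mem_range] at hk ⊢
    try dsimp only at hk ⊢
    exact ⟨by omega, ⟨k, by omega⟩⟩
  · intro l hl
    simp only [mem_filter, mem_range] at hl
    obtain ⟨r, hr⟩ := hl.2
    try dsimp only
    omega
  · intro k _
    try dsimp only
    omega
  · intro l hl
    simp only [mem_filter, mem_range] at hl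
    obtain ⟨r, hr⟩ := hl.2
    try dsimp only
    congr 1
    omega

lemma hasSum_K (t : ℝ) :
    HasSum (fun m : ℕ => (-1 : ℝ) ^ m * ((2 * m).choose m) / m.factorial * t ^ m)
      (Real.exp (-2 * t) * ∑' k : ℕ, t ^ (2 * k) / (k.factorial : ℝ) ^ 2) := by
  classical
  set u : ℕ → ℝ := fun i => (-2 * t) ^ i / i.factorial with hu_def
  set v : ℕ → ℝ := fun l => if Even l then t ^ l / (((l / 2).factorial : ℝ)) ^ 2 else 0 with hv_def
  set w : ℕ → ℝ := fun k => t ^ (2 * k) / ((k.factorial : ℝ)) ^ 2 with hw_def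
  have hu : HasSum u (Real.exp (-2 * t)) := by
    rw [Real.exp_eq_exp_ℝ]
    exact NormedSpace.expSeries_div_hasSum_exp (-2 * t)
  have hu_norm : Summable (fun i => ‖u i‖) := by
    refine (Real.summable_pow_div_factorial (|(-2 * t)|)).congr fun i => ?_
    simp [hu_def, abs_div, abs_pow, abs_mul]
  have hw_norm : Summable (fun k => ‖w k‖) := by
    refine Summable.of_nonneg_of_le (fun k => norm_nonneg _) (fun k => ?_)
      (Real.summable_pow_div_factorial (t ^ 2))
    have h1 : (1 : ℝ) ≤ (k.factorial : ℝ) := by exact_mod_cast k.factorial_pos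
    have h2 : (k.factorial : ℝ) ≤ (k.factorial : ℝ) ^ 2 := by nlinarith
    have h3 : ‖w k‖ = (t ^ 2) ^ k / ((k.factorial : ℝ)) ^ 2 := by
      show ‖t ^ (2 * k) / ((k.factorial : ℝ)) ^ 2‖ = _
      rw [pow_mul, Real.norm_eq_abs, abs_of_nonneg (by positivity)]
    rw [h3]
    exact div_le_div_of_nonneg_left (by positivity)
      (by exact_mod_cast k.factorial_pos) h2
  have hw_sum : Summable w := hw_norm.of_norm
  have hinj : Function.Injective (fun k : ℕ => 2 * k) := fun a b h => by
    have h' : 2 * a = 2 * b := h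
    omega
  have hrange : ∀ l, l ∉ Set.range (fun k : ℕ => 2 * k) → v l = 0 := by
    intro l hl
    have : ¬ Even l := by
      intro ⟨r, hr⟩
      exact hl ⟨r, by show 2 * r = l; omega⟩
    simp [hv_def, this]
  have hcompv : v ∘ (fun k : ℕ => 2 * k) = w := by
    funext k
    have h2 : 2 * k / 2 = k := Nat.mul_div_cancel_left k (by norm_num)
    simp only [Function.comp_apply, hv_def, hw_def, if_pos (even_two_mul k), h2]
  have hv : HasSum v (∑' k, w k) := by
    rw [← hinj.hasSum_iff hrange, hcompv]
    exact hw_sum.hasSum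
  have hv_norm : Summable (fun l => ‖v l‖) := by
    refine (hinj.summable_iff (f := fun l => ‖v l‖) fun l hl => by simp [hrange l hl]).mp
      (hw_norm.congr fun k => ?_)
    have hk : v (2 * k) = w k := by simpa using congrFun hcompv k
    simp [Function.comp_apply, hk]
  have hprod := tsum_mul_tsum_eq_tsum_sum_antidiagonal_of_summable_norm hu_norm hv_norm
  have hA_norm : Summable (fun m => ‖∑ ij ∈ Finset.HasAntidiagonal.antidiagonal m, u ij.1 * v ij.2‖) :=
    summable_norm_sum_mul_antidiagonal_of_summable_norm hu_norm hv_norm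
  have hA : Summable (fun m => ∑ ij ∈ Finset.HasAntidiagonal.antidiagonal m, u ij.1 * v ij.2) := hA_norm.of_norm
  have hcoeff : ∀ m : ℕ, ∑ ij ∈ Finset.HasAntidiagonal.antidiagonal m, u ij.1 * v ij.2
      = (-1 : ℝ) ^ m * ((2 * m).choose m) / m.factorial * t ^ m := by
    intro m
    have h1 : (∑ ij ∈ Finset.HasAntidiagonal.antidiagonal m, u ij.1 * v ij.2)
        = ∑ ij ∈ Finset.HasAntidiagonal.antidiagonal m, v ij.1 * u ij.2 := by
      rw [← Finset.Nat.sum_antidiagonal_swap (f := fun p : ℕ × ℕ => v p.1 * u p.2)]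
      exact Finset.sum_congr rfl fun p _ => mul_comm _ _
    have h4 : ∀ k ∈ range (m + 1), (if 2 * k ≤ m then v (2 * k) * u (m - 2 * k) else 0)
        = (if 2 * k ≤ m then t ^ (2 * k) / ((k.factorial : ℝ)) ^ 2 *
            ((-2 * t) ^ (m - 2 * k) / ((m - 2 * k).factorial : ℝ)) else 0) := by
      intro k _
      split_ifs with h
      · have hk : v (2 * k) = w k := by simpa using congrFun hcompv k
        rw [hk]
      · rfl
    calc (∑ ij ∈ Finset.HasAntidiagonal.antidiagonal m, u ij.1 * v ij.2)
        = ∑ k ∈ range (m + 1), (if 2 * k ≤ m then t ^ (2 * k) / ((k.factorial : ℝ)) ^ 2 *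
            ((-2 * t) ^ (m - 2 * k) / ((m - 2 * k).factorial : ℝ)) else 0) := by
          rw [h1, Finset.Nat.sum_antidiagonal_eq_sum_range_succ (fun i l => v i * u l) m,
            sum_even_reindex m (fun l => v l * u (m - l)) (fun l hl => by simp [hv_def, hl])]
          exact Finset.sum_congr rfl h4
      _ = (-1) ^ m * ((2 * m).choose m : ℝ) * t ^ m / m.factorial := keyReal m t
      _ = (-1 : ℝ) ^ m * ((2 * m).choose m) / m.factorial * t ^ m := by ring
  have hfinal : HasSum (fun m => ∑ ij ∈ Finset.HasAntidiagonal.antidiagonal m, u ij.1 * v ij.2)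
      (Real.exp (-2 * t) * ∑' k : ℕ, t ^ (2 * k) / (k.factorial : ℝ) ^ 2) := by
    have h := hA.hasSum
    rwa [← hprod, hu.tsum_eq, hv.tsum_eq] at h
  exact (funext hcoeff) ▸ hfinal


lemma centralBinom_le_four_pow (m : ℕ) : (2 * m).choose m ≤ 4 ^ m := by
  induction m with
  | zero => simp
  | succ m ih =>
    have h := Nat.succ_mul_centralBinom_succ m
    have h2 : (m + 1) * Nat.centralBinom (m + 1) ≤ (m + 1) * (4 * Nat.centralBinom m) := by
      rw [h]
      have : 2 * (2 * m + 1) ≤ 4 * (m + 1) := by omega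
      calc 2 * (2 * m + 1) * Nat.centralBinom m ≤ 4 * (m + 1) * Nat.centralBinom m :=
            Nat.mul_le_mul_right _ this
        _ = (m + 1) * (4 * Nat.centralBinom m) := by ring
    have h3 := Nat.le_of_mul_le_mul_left h2 (Nat.succ_pos m)
    calc (2 * (m + 1)).choose (m + 1) = Nat.centralBinom (m + 1) := rfl
      _ ≤ 4 * Nat.centralBinom m := h3
      _ ≤ 4 * 4 ^ m := Nat.mul_le_mul_left 4 ih
      _ = 4 ^ (m + 1) := by ring

theorem stmt_11 (n : ℕ) (hn : 0 < n) (j : ℕ)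
    (K : ℝ → ℝ)
    (hK : ∀ x : ℝ, K x = Real.exp (-2 * n * x) * ∑' k : ℕ, (n * x) ^ (2 * k) / (k.factorial : ℝ) ^ 2) :
    iteratedDeriv j K 0 = (-(n : ℝ)) ^ j * ((2 * j).choose j) := by
  set c : ℕ → ℝ := fun m => (-(n : ℝ)) ^ m * ((2 * m).choose m) / m.factorial with hc_def
  set p := FormalMultilinearSeries.ofScalars ℝ c with hp_def
  have habs : ∀ m, |c m| ≤ (4 * n : ℝ) ^ m / m.factorial := by
    intro m
    have h1 : |c m| = (n : ℝ) ^ m * ((2 * m).choose m) / m.factorial := by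
      rw [hc_def]
      rw [abs_div, abs_mul, abs_pow, abs_neg, abs_of_nonneg (by positivity : (0:ℝ) ≤ (n:ℝ)),
        abs_of_nonneg (by positivity : (0:ℝ) ≤ (((2 * m).choose m : ℕ) : ℝ)),
        abs_of_nonneg (by positivity : (0:ℝ) ≤ ((m.factorial : ℕ) : ℝ))]
    rw [h1]
    have h2 : ((2 * m).choose m : ℝ) ≤ (4 : ℝ) ^ m := by
      exact_mod_cast Nat.cast_le.mpr (centralBinom_le_four_pow m)
    have h3 : (n : ℝ) ^ m * ((2 * m).choose m) ≤ (4 * n : ℝ) ^ m := by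
      calc (n : ℝ) ^ m * ((2 * m).choose m) ≤ (n : ℝ) ^ m * 4 ^ m :=
            mul_le_mul_of_nonneg_left h2 (by positivity)
        _ = (4 * n : ℝ) ^ m := by rw [← mul_pow]; ring_nf
    exact (div_le_div_iff_of_pos_right (by exact_mod_cast m.factorial_pos)).mpr h3
  have hsummable : Summable fun m => ‖p m‖ * (1 : ℝ) ^ m := by
    refine Summable.of_nonneg_of_le (fun m => by positivity) (fun m => ?_)
      (Real.summable_pow_div_factorial (4 * n : ℝ))
    rw [one_pow, mul_one, hp_def, FormalMultilinearSeries.ofScalars_norm]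
    exact habs m
  have hball : HasFPowerSeriesOnBall K p 0 1 := by
    refine ⟨?_, one_pos, ?_⟩
    · have := p.le_radius_of_summable_norm (r := 1) (by simpa using hsummable)
      simpa using this
    · intro y _
      have h := hasSum_K ((n : ℝ) * y)
      have he : Real.exp (-2 * ((n : ℝ) * y)) = Real.exp (-2 * (n : ℝ) * y) := by ring_nf
      rw [he] at h
      have hfun : ∀ m : ℕ, p m (fun _ => y) =
          (-1 : ℝ) ^ m * ((2 * m).choose m) / m.factorial * ((n : ℝ) * y) ^ m := by
        intro m
        rw [hp_def, FormalMultilinearSeries.ofScalars_apply_eq, smul_eq_mul, hc_def]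
        rw [mul_pow, neg_pow]
        ring
      rw [zero_add, hK y]
      exact (funext hfun) ▸ h
  have hfact := hball.factorial_smul (1 : ℝ) j
  have h1 : p j (fun _ => (1 : ℝ)) = c j := by
    rw [hp_def, FormalMultilinearSeries.ofScalars_apply_eq, one_pow, smul_eq_mul, mul_one]
  rw [iteratedDeriv_eq_iteratedFDeriv, ← hfact, h1, hc_def]
  have hjf : ((j.factorial : ℝ)) ≠ 0 := Nat.cast_ne_zero.mpr j.factorial_ne_zero
  rw [nsmul_eq_mul]
  field_simp
end

section
/- Fix a real γ > 0 and a real θ, and for each integer n ≥ 0 define P_n(x) := ∑_{k=0}^{n} 4^k C(n,k) ((θ)_k/(γ)_k) (x²−x)^k, where (r)_k is the Pochhammer symbol. Then P_{n+1}'(x) = (4(n+1)θ/γ)·(2x−1)·Q_n(x), where Q_n(x) := ∑_{k=0}^{n} 4^k C(n,k) ((θ+1)_k/(γ+1)_k) (x²−x)^k. -/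
theorem stmt_15 (γ θ : ℝ) (hγ : 0 < γ) (n : ℕ)
    (P Q : ℕ → ℝ → ℝ)
    (hP : ∀ m : ℕ, ∀ x : ℝ, P m x = ∑ k ∈ Finset.range (m + 1),
      4 ^ k * (m.choose k : ℝ) *
        ((ascPochhammer ℝ k).eval θ / (ascPochhammer ℝ k).eval γ) * (x ^ 2 - x) ^ k)
    (hQ : ∀ m : ℕ, ∀ x : ℝ, Q m x = ∑ k ∈ Finset.range (m + 1),
      4 ^ k * (m.choose k : ℝ) *
        ((ascPochhammer ℝ k).eval (θ + 1) / (ascPochhammer ℝ k).eval (γ + 1)) * (x ^ 2 - x) ^ k)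
    (x : ℝ) :
    deriv (P (n + 1)) x = (4 * (n + 1) * θ / γ) * (2 * x - 1) * Q n x := by
  set c : ℕ → ℝ := fun k => 4 ^ k * ((n + 1).choose k : ℝ) *
      ((ascPochhammer ℝ k).eval θ / (ascPochhammer ℝ k).eval γ) with hc
  have hPf : P (n + 1) = fun y : ℝ => ∑ k ∈ Finset.range (n + 2), c k * (y ^ 2 - y) ^ k := by
    funext y; rw [hP]
  have hbase : HasDerivAt (fun y : ℝ => y ^ 2 - y) (2 * x - 1) x := by
    have h1 : HasDerivAt (fun y : ℝ => y ^ 2) (2 * x) x := by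
      simpa using hasDerivAt_pow 2 x
    simpa using h1.fun_sub (hasDerivAt_id x)
  have hd : HasDerivAt (P (n + 1))
      (∑ k ∈ Finset.range (n + 2), c k * (k * (x ^ 2 - x) ^ (k - 1) * (2 * x - 1))) x := by
    rw [hPf]
    exact HasDerivAt.fun_sum fun k _ => (hbase.fun_pow k).const_mul (c k)
  rw [hd.deriv, hQ]
  rw [Finset.sum_range_succ']
  simp only [Nat.cast_zero, pow_zero, zero_mul, mul_zero, add_zero]
  rw [Finset.mul_sum]
  apply Finset.sum_congr rfl
  intro j _
  have hev : ∀ r : ℝ, (ascPochhammer ℝ (j + 1)).eval r = r * (ascPochhammer ℝ j).eval (r + 1) := by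
    intro r
    rw [ascPochhammer_succ_left]
    simp [Polynomial.eval_comp]
  have hch : ((j : ℝ) + 1) * ((n + 1).choose (j + 1) : ℝ) = ((n : ℝ) + 1) * (n.choose j : ℝ) := by
    have h2 : ((n + 1).choose (j + 1) * (j + 1) : ℕ) = (n + 1) * n.choose j :=
      (Nat.add_one_mul_choose_eq n j).symm
    have h3 := congrArg (Nat.cast : ℕ → ℝ) h2
    push_cast at h3
    linarith
  have hγp : (0:ℝ) < (ascPochhammer ℝ j).eval (γ + 1) :=
    ascPochhammer_pos j _ (by linarith)
  have hγn : (ascPochhammer ℝ j).eval (γ + 1) ≠ 0 := ne_of_gt hγp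
  simp only [hc, hev, Nat.add_sub_cancel, Nat.cast_add, Nat.cast_one]
  field_simp
  linear_combination (4 ^ j * (x ^ 2 - x) ^ j * (2 * x - 1) * 4 * θ * Polynomial.eval (θ + 1) (ascPochhammer ℝ j)) * hch
end
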